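/- arXiv:2203.06775 — 5 statements merged into one kernel-verified Lean document; each statement's English description precedes it below -/
import Mathlib

section
/- Let G be a connected (theta, triangle, wheel)-free graph with no clique cutset. Then G has no star cutset: there is no vertex v and set C with v in C, C contained in the closed neighborhood N[v], such that G minus C is disconnected. -/
open SimpleGraph Set

namespace Paper

variable {V : Type} {W : Type}

/-- X and Y are anticomplete: no edge between them. -/
def Anticomplete (G : SimpleGraph V) (X Y : Set V) : Prop :=
  ∀ x ∈ X, ∀ y ∈ Y, ¬ G.Adj x y

/-- Closed neighborhood N[v]. -/
def closedNbr (G : SimpleGraph V) (v : V) : Set V := insert v (G.neighborSet v)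

/-- Open neighborhood N(X) of a set of vertices. -/
def setNbr (G : SimpleGraph V) (X : Set V) : Set V :=
  {v | v ∉ X ∧ ∃ x ∈ X, G.Adj x v}

/-- Closed neighborhood N[X] of a set of vertices. -/
def closedNbrSet (G : SimpleGraph V) (X : Set V) : Set V := X ∪ setNbr G X

/-- D is a connected component of the subgraph of G induced on S. -/
def IsComponentOf (G : SimpleGraph V) (S D : Set V) : Prop :=
  D.Nonempty ∧ D ⊆ S ∧ (G.induce D).Connected ∧
    ∀ D' : Set V, D ⊆ D' → D' ⊆ S → (G.induce D').Connected → D' = D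

/-- G contains no induced copy of H. -/
def HFree (G : SimpleGraph V) (H : SimpleGraph W) : Prop :=
  ∀ s : Set V, ¬ Nonempty ((G.induce s) ≃g H)

/-- The diamond: K₄ minus the edge 01. -/
def diamond : SimpleGraph (Fin 4) :=
  SimpleGraph.fromRel (fun x y => s(x, y) ≠ s(0, 1))

/-- H is a hole of G: an induced cycle of length at least 4. -/
def IsHole (G : SimpleGraph V) (H : Set V) : Prop :=
  ∃ n, 4 ≤ n ∧ Nonempty ((G.induce H) ≃g cycleGraph n)

/-- H is an even hole of G. -/
def IsEvenHole (G : SimpleGraph V) (H : Set V) : Prop :=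
  ∃ n, 4 ≤ n ∧ Even n ∧ Nonempty ((G.induce H) ≃g cycleGraph n)

/-- (H, w) is a wheel: a hole plus a vertex with ≥ 3 pairwise non-adjacent neighbors in H. -/
def IsWheel (G : SimpleGraph V) (H : Set V) (w : V) : Prop :=
  IsHole G H ∧ ∃ x y z, x ∈ H ∩ G.neighborSet w ∧ y ∈ H ∩ G.neighborSet w ∧
    z ∈ H ∩ G.neighborSet w ∧ x ≠ y ∧ x ≠ z ∧ y ≠ z ∧
    ¬ G.Adj x y ∧ ¬ G.Adj x z ∧ ¬ G.Adj y z

/-- (H, v) is a line wheel: N(v) ∩ H is a union of two disjoint edges. -/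
def IsLineWheel (G : SimpleGraph V) (H : Set V) (v : V) : Prop :=
  IsHole G H ∧ v ∉ H ∧ ∃ a b c d : V,
    a ≠ b ∧ a ≠ c ∧ a ≠ d ∧ b ≠ c ∧ b ≠ d ∧ c ≠ d ∧
    G.neighborSet v ∩ H = {a, b, c, d} ∧
    G.Adj a b ∧ G.Adj c d ∧ ¬ G.Adj a c ∧ ¬ G.Adj a d ∧ ¬ G.Adj b c ∧ ¬ G.Adj b d

/-- An even wheel: a line wheel, or a wheel with an even number of neighbors in the hole,
not forming a path of length one. -/
def IsEvenWheel (G : SimpleGraph V) (H : Set V) (v : V) : Prop :=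
  IsLineWheel G H v ∨
    (IsWheel G H v ∧ Even ((G.neighborSet v ∩ H).ncard) ∧
      ¬ ∃ a b, a ≠ b ∧ G.Adj a b ∧ G.neighborSet v ∩ H = {a, b})

/-- The set of vertices of a walk. -/
def suppSet (G : SimpleGraph V) {a b : V} (p : G.Walk a b) : Set V :=
  {v | v ∈ p.support}

/-- A walk is induced: the only adjacencies among its vertices are its own edges. -/
def InducedWalk (G : SimpleGraph V) {a b : V} (p : G.Walk a b) : Prop :=
  ∀ u v, u ∈ p.support → v ∈ p.support → G.Adj u v → s(u, v) ∈ p.edges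

/-- The interior of a walk: its vertices except the two endpoints. -/
def wInterior (G : SimpleGraph V) {a b : V} (p : G.Walk a b) : Set V :=
  {v | v ∈ p.support ∧ v ≠ a ∧ v ≠ b}

/-- G contains a theta as an induced subgraph. -/
def ContainsTheta (G : SimpleGraph V) : Prop :=
  ∃ (a b : V) (p₁ p₂ p₃ : G.Walk a b),
    ¬ G.Adj a b ∧
    p₁.IsPath ∧ p₂.IsPath ∧ p₃.IsPath ∧
    InducedWalk G p₁ ∧ InducedWalk G p₂ ∧ InducedWalk G p₃ ∧
    2 ≤ p₁.length ∧ 2 ≤ p₂.length ∧ 2 ≤ p₃.length ∧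
    Disjoint (wInterior G p₁) (wInterior G p₂) ∧
    Disjoint (wInterior G p₁) (wInterior G p₃) ∧
    Disjoint (wInterior G p₂) (wInterior G p₃) ∧
    Anticomplete G (wInterior G p₁) (wInterior G p₂) ∧
    Anticomplete G (wInterior G p₁) (wInterior G p₃) ∧
    Anticomplete G (wInterior G p₂) (wInterior G p₃)

/-- G contains a pyramid as an induced subgraph. -/
def ContainsPyramid (G : SimpleGraph V) : Prop :=
  ∃ (a b₁ b₂ b₃ : V) (p₁ : G.Walk a b₁) (p₂ : G.Walk a b₂) (p₃ : G.Walk a b₃),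
    G.Adj b₁ b₂ ∧ G.Adj b₁ b₃ ∧ G.Adj b₂ b₃ ∧
    p₁.IsPath ∧ p₂.IsPath ∧ p₃.IsPath ∧
    InducedWalk G p₁ ∧ InducedWalk G p₂ ∧ InducedWalk G p₃ ∧
    1 ≤ p₁.length ∧ 1 ≤ p₂.length ∧ 1 ≤ p₃.length ∧
    ((2 ≤ p₁.length ∧ 2 ≤ p₂.length) ∨ (2 ≤ p₁.length ∧ 2 ≤ p₃.length) ∨
      (2 ≤ p₂.length ∧ 2 ≤ p₃.length)) ∧
    Disjoint (suppSet G p₁ \ {a}) (suppSet G p₂ \ {a}) ∧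
    Disjoint (suppSet G p₁ \ {a}) (suppSet G p₃ \ {a}) ∧
    Disjoint (suppSet G p₂ \ {a}) (suppSet G p₃ \ {a}) ∧
    (∀ u v, u ∈ suppSet G p₁ \ {a} → v ∈ suppSet G p₂ \ {a} → G.Adj u v →
      u = b₁ ∧ v = b₂) ∧
    (∀ u v, u ∈ suppSet G p₁ \ {a} → v ∈ suppSet G p₃ \ {a} → G.Adj u v →
      u = b₁ ∧ v = b₃) ∧
    (∀ u v, u ∈ suppSet G p₂ \ {a} → v ∈ suppSet G p₃ \ {a} → G.Adj u v →
      u = b₂ ∧ v = b₃)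

/-- G contains a prism as an induced subgraph. -/
def ContainsPrism (G : SimpleGraph V) : Prop :=
  ∃ (a₁ a₂ a₃ b₁ b₂ b₃ : V) (p₁ : G.Walk a₁ b₁) (p₂ : G.Walk a₂ b₂) (p₃ : G.Walk a₃ b₃),
    G.Adj a₁ a₂ ∧ G.Adj a₁ a₃ ∧ G.Adj a₂ a₃ ∧
    G.Adj b₁ b₂ ∧ G.Adj b₁ b₃ ∧ G.Adj b₂ b₃ ∧
    p₁.IsPath ∧ p₂.IsPath ∧ p₃.IsPath ∧
    InducedWalk G p₁ ∧ InducedWalk G p₂ ∧ InducedWalk G p₃ ∧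
    Disjoint (suppSet G p₁) (suppSet G p₂) ∧
    Disjoint (suppSet G p₁) (suppSet G p₃) ∧
    Disjoint (suppSet G p₂) (suppSet G p₃) ∧
    (∀ u v, u ∈ suppSet G p₁ → v ∈ suppSet G p₂ → G.Adj u v →
      s(u, v) = s(a₁, a₂) ∨ s(u, v) = s(b₁, b₂)) ∧
    (∀ u v, u ∈ suppSet G p₁ → v ∈ suppSet G p₃ → G.Adj u v →
      s(u, v) = s(a₁, a₃) ∨ s(u, v) = s(b₁, b₃)) ∧
    (∀ u v, u ∈ suppSet G p₂ → v ∈ suppSet G p₃ → G.Adj u v →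
      s(u, v) = s(a₂, a₃) ∨ s(u, v) = s(b₂, b₃))

/-- G has a clique cutset. -/
def HasCliqueCutset (G : SimpleGraph V) : Prop :=
  ∃ C : Set V, G.IsClique C ∧ ¬ (G.induce Cᶜ).Preconnected

/-- (A, C, B) is a separation of G. -/
def IsSeparation (G : SimpleGraph V) (A C B : Set V) : Prop :=
  A ∪ C ∪ B = Set.univ ∧ Disjoint A C ∧ Disjoint A B ∧ Disjoint C B ∧
    Anticomplete G A B

/-- The weight of a set of vertices. -/
noncomputable def fweight (w : V → ℝ) (X : Set V) : ℝ := ∑ᶠ x ∈ X, w x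

/-- X is a (w, c)-balanced separator of G. -/
def IsBalSep (G : SimpleGraph V) (w : V → ℝ) (c : ℝ) (X : Set V) : Prop :=
  ∀ D, IsComponentOf G Xᶜ D → fweight w D ≤ c

/-- The treewidth of G is at most k. -/
def TreewidthLE (G : SimpleGraph V) (k : ℕ) : Prop :=
  ∃ (T : Type) (tG : SimpleGraph T) (χ : T → Set V),
    tG.IsTree ∧
    (∀ v, ∃ t, v ∈ χ t) ∧
    (∀ u v, G.Adj u v → ∃ t, u ∈ χ t ∧ v ∈ χ t) ∧
    (∀ v, (tG.induce {t | v ∈ χ t}).Connected) ∧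
    ∀ t, (χ t).ncard ≤ k + 1

/-- The Ramsey number R(t, s). -/
noncomputable def ramsey (t s : ℕ) : ℕ :=
  sInf {n | ∀ G : SimpleGraph (Fin n), ¬ G.CliqueFree t ∨ ¬ Gᶜ.CliqueFree s}

/-- (H, v) is a twin wheel: N(v) ∩ H is a path of length two. -/
def IsTwinWheel (G : SimpleGraph V) (H : Set V) (v : V) : Prop :=
  IsHole G H ∧ ∃ a b c : V, a ≠ b ∧ a ≠ c ∧ b ≠ c ∧
    G.neighborSet v ∩ H = {a, b, c} ∧ G.Adj a b ∧ G.Adj b c ∧ ¬ G.Adj a c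

/-- (H, v) is a short pyramid: v has exactly three neighbors in H, exactly two adjacent. -/
def IsShortPyramid (G : SimpleGraph V) (H : Set V) (v : V) : Prop :=
  IsHole G H ∧ ∃ a b c : V, a ≠ b ∧ a ≠ c ∧ b ≠ c ∧
    G.neighborSet v ∩ H = {a, b, c} ∧ G.Adj a b ∧ ¬ G.Adj a c ∧ ¬ G.Adj b c

/-- A proper wheel: a wheel that is neither a twin wheel nor a short pyramid. -/
def IsProperWheel (G : SimpleGraph V) (H : Set V) (v : V) : Prop :=
  IsWheel G H v ∧ ¬ IsTwinWheel G H v ∧ ¬ IsShortPyramid G H v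

/-- A universal wheel: v is complete to H. -/
def IsUniversalWheel (G : SimpleGraph V) (H : Set V) (v : V) : Prop :=
  IsWheel G H v ∧ H ⊆ G.neighborSet v

/-!
Shrink the star cutset to a separator `Y ⊆ N[v]` containing `v` with two components `A` and `B`
such that every vertex of `Y \ {v}` has neighbours in both. Since `Y` is not a clique cutset, it
contains non-adjacent `x`, `y`, both adjacent to `v`. Chordless `x`–`y` paths `P` through `A` and
`Q` through `B` form a hole. If `v` has a neighbour `z` in the interior of `P` or `Q`, then `x`,
`y`, `z` are pairwise non-adjacent (no triangles) and `v` is the centre of a wheel; otherwise `P`,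
`Q` and `x v y` form a theta.
-/

end Paper

namespace SimpleGraph.Walk

variable {V : Type*} {G : SimpleGraph V} {u v : V}

lemma exists_shorter_of_adj_getVert (p : G.Walk u v) {i j : ℕ} (hij : i + 2 ≤ j)
    (hj : j ≤ p.length) (h : G.Adj (p.getVert i) (p.getVert j)) :
    ∃ q : G.Walk u v, q.length < p.length ∧ q.support ⊆ p.support := by
  refine ⟨(p.take i).append (cons h (p.drop j)), ?_, fun z hz => ?_⟩
  · simp only [length_append, length_cons, take_length, drop_length]; omega
  rw [mem_support_append_iff, support_cons, List.mem_cons] at hz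
  rcases hz with hz | rfl | hz
  · rw [support_take] at hz; exact List.mem_of_mem_take hz
  · exact p.getVert_mem_support i
  · rw [drop_support_eq_support_drop_min] at hz; exact List.mem_of_mem_drop hz

lemma exists_shorter_of_not_isChordless {p : G.Walk u v} (hp : ¬ p.IsChordless) :
    ∃ q : G.Walk u v, q.length < p.length ∧ q.support ⊆ p.support := by
  rw [isChordless_iff_forall_mem_edges] at hp
  push Not at hp
  obtain ⟨a, b, ha, hb, hab, hnot⟩ := hp
  obtain ⟨i, rfl, hi⟩ := mem_support_iff_exists_getVert.1 ha
  obtain ⟨j, rfl, hj⟩ := mem_support_iff_exists_getVert.1 hb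
  have hstep (k : ℕ) (hk : k < p.length) : s(p.getVert k, p.getVert (k + 1)) ∈ p.edges :=
    (mk_mem_edges_iff_exists p).2 ⟨k, hk, rfl⟩
  rcases lt_trichotomy i j with h | rfl | h
  · refine p.exists_shorter_of_adj_getVert ?_ hj hab
    by_contra! h'
    obtain rfl : j = i + 1 := by omega
    exact hnot (hstep i (by omega))
  · exact absurd hab (G.irrefl)
  · refine p.exists_shorter_of_adj_getVert ?_ hi hab.symm
    by_contra! h'
    obtain rfl : i = j + 1 := by omega
    exact hnot (Sym2.eq_swap ▸ hstep j (by omega))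

theorem exists_isPath_isChordless_support_subset (p : G.Walk u v) :
    ∃ q : G.Walk u v, q.IsPath ∧ q.IsChordless ∧ q.support ⊆ p.support := by
  classical
  induction hn : p.length using Nat.strong_induction_on generalizing p with
  | _ n ih =>
  by_cases hc : p.bypass.IsChordless
  · exact ⟨p.bypass, p.bypass_isPath, hc, p.support_bypass_subset_support⟩
  obtain ⟨q, hlt, hsub⟩ := exists_shorter_of_not_isChordless hc
  obtain ⟨r, hr, hrc, hrs⟩ := ih q.length (by have := p.length_bypass_le_length; omega) q rfl
  exact ⟨r, hr, hrc,
    List.Subset.trans hrs (List.Subset.trans hsub p.support_bypass_subset_support)⟩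

lemma getVert_val_add_one {c : G.Walk u u} {m : ℕ} (hm : c.length = m + 2)
    (i : Fin (m + 2)) : c.getVert ↑(i + 1) = c.getVert (i + 1) := by
  rw [Fin.val_add_one]
  split_ifs with h
  · rw [h, Fin.val_last, getVert_zero, show m + 1 + 1 = c.length by omega, getVert_length]
  · rfl

theorem IsCycle.nonempty_iso_cycleGraph {c : G.Walk u u} (hc : c.IsCycle)
    (hch : c.IsChordless) {m : ℕ} (hm : c.length = m + 2) :
    Nonempty (G.induce {z | z ∈ c.support} ≃g cycleGraph (m + 2)) := by
  let f (i : Fin (m + 2)) : V := c.getVert i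
  have hinj : f.Injective := fun i j h =>
    Fin.ext (hc.getVert_injOn' (show (i : ℕ) ≤ c.length - 1 by omega)
      (show (j : ℕ) ≤ c.length - 1 by omega) h)
  have hsucc (i : Fin (m + 2)) : f (i + 1) = c.getVert (i + 1) := getVert_val_add_one hm i
  have hadj (i j : Fin (m + 2)) : G.Adj (f i) (f j) ↔ (cycleGraph (m + 2)).Adj i j := by
    rw [cycleGraph_adj, sub_eq_iff_eq_add', sub_eq_iff_eq_add']
    constructor
    · intro h
      obtain ⟨k, hk, he⟩ := (mk_mem_edges_iff_exists c).1
        (hch.mem_edges (c.getVert_mem_support _) (c.getVert_mem_support _) h)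
      let k' : Fin (m + 2) := ⟨k, by omega⟩
      rw [show c.getVert k = f k' from rfl, ← hsucc k', Sym2.eq_iff] at he
      rcases he with ⟨h1, h2⟩ | ⟨h1, h2⟩
      · right; rw [← hinj h1, hinj h2]
      · left; rw [← hinj h1, hinj h2]
    · rintro (h | h)
      · rw [h, hsucc]; exact (c.adj_getVert_succ (by omega)).symm
      · rw [h, hsucc]; exact c.adj_getVert_succ (by omega)
  let e (i : Fin (m + 2)) : {z | z ∈ c.support} := ⟨f i, c.getVert_mem_support _⟩
  have hsurj : e.Surjective := by
    rintro ⟨z, hz⟩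
    obtain ⟨n, rfl, hn⟩ := mem_support_iff_exists_getVert.1 hz
    rcases Nat.lt_or_ge n (m + 2) with h | h
    · exact ⟨⟨n, h⟩, rfl⟩
    · refine ⟨0, Subtype.ext ?_⟩
      simp only [e, f, Fin.val_zero, getVert_zero]
      rw [show n = c.length by omega, getVert_length]
  exact ⟨(RelIso.mk (Equiv.ofBijective e ⟨fun i j h => hinj (congrArg Subtype.val h), hsurj⟩)
    (hadj _ _)).symm⟩

lemma IsPath.ne_start_of_mem_support_tail {z : V} {p : G.Walk u v} (hp : p.IsPath)
    (hz : z ∈ p.support.tail) : z ≠ u := by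
  rintro rfl
  have h := hp.support_nodup
  rw [← cons_tail_support] at h
  exact (List.nodup_cons.1 h).1 hz

end SimpleGraph.Walk

namespace Paper

open SimpleGraph.Walk

variable {V : Type} {G : SimpleGraph V}

def compAvoiding (G : SimpleGraph V) (S : Set V) (a : V) : Set V :=
  {z | ∃ p : G.Walk a z, ∀ x ∈ p.support, x ∉ S}

section compAvoiding

variable {S T : Set V} {a b c u w : V}

lemma notMem_of_mem_compAvoiding (h : u ∈ compAvoiding G S a) : u ∉ S :=
  let ⟨p, hp⟩ := h
  hp u p.end_mem_support

lemma mem_compAvoiding_self (ha : a ∉ S) : a ∈ compAvoiding G S a :=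
  ⟨nil, by simpa using ha⟩

lemma mem_compAvoiding_of_adj (hu : u ∈ compAvoiding G S a) (hw : w ∉ S) (h : G.Adj u w) :
    w ∈ compAvoiding G S a := by
  obtain ⟨p, hp⟩ := hu
  refine ⟨p.concat h, fun x hx => ?_⟩
  rw [support_concat, List.mem_append, List.mem_singleton] at hx
  rcases hx with hx | rfl
  exacts [hp x hx, hw]

lemma mem_compAvoiding_comm (h : b ∈ compAvoiding G S a) : a ∈ compAvoiding G S b := by
  obtain ⟨p, hp⟩ := h
  exact ⟨p.reverse, fun x hx => hp x (by simpa using hx)⟩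

lemma mem_compAvoiding_trans (hb : b ∈ compAvoiding G S a) (hc : c ∈ compAvoiding G S b) :
    c ∈ compAvoiding G S a := by
  obtain ⟨p, hp⟩ := hb
  obtain ⟨q, hq⟩ := hc
  refine ⟨p.append q, fun x hx => ?_⟩
  rcases (mem_support_append_iff p q).1 hx with hx | hx
  exacts [hp x hx, hq x hx]

lemma compAvoiding_mono (h : T ⊆ S) : compAvoiding G S a ⊆ compAvoiding G T a :=
  fun _ ⟨p, hp⟩ => ⟨p, fun x hx hxT => hp x hx (h hxT)⟩

lemma support_subset_compAvoiding (p : G.Walk a u) (hp : ∀ x ∈ p.support, x ∉ S) :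
    ∀ x ∈ p.support, x ∈ compAvoiding G S a := by
  classical
  exact fun x hx =>
    ⟨p.takeUntil x hx, fun y hy => hp y (p.support_takeUntil_subset_support hx hy)⟩

lemma compAvoiding_subset_of_closed {D : Set V} (ha : a ∈ D)
    (hD : ∀ u ∈ D, ∀ w, w ∉ S → G.Adj u w → w ∈ D) : compAvoiding G S a ⊆ D := by
  rintro z ⟨p, hp⟩
  induction p with
  | nil => exact ha
  | cons h p ih =>
    exact ih (hD _ ha _ (hp _ (by simp)) h) fun x hx => hp x (by simp [hx])

lemma disjoint_compAvoiding (hab : b ∉ compAvoiding G S a) :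
    Disjoint (compAvoiding G S a) (compAvoiding G S b) :=
  Set.disjoint_left.2 fun _ h₁ h₂ =>
    hab (mem_compAvoiding_trans h₁ (mem_compAvoiding_comm h₂))

lemma anticomplete_compAvoiding (hab : b ∉ compAvoiding G S a) :
    Anticomplete G (compAvoiding G S a) (compAvoiding G S b) := fun _ hu _ hw h =>
  hab (mem_compAvoiding_trans (mem_compAvoiding_of_adj hu (notMem_of_mem_compAvoiding hw) h)
    (mem_compAvoiding_comm hw))

lemma not_preconnected_induce_compl (ha : a ∉ S) (hb : b ∉ S)
    (hab : b ∉ compAvoiding G S a) : ¬ (G.induce Sᶜ).Preconnected := fun h =>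
  let ⟨p⟩ := h ⟨a, ha⟩ ⟨b, hb⟩
  let q : G.Walk a b := p.map (Embedding.induce Sᶜ).toHom
  have hq : q.support = p.support.map Subtype.val := Walk.support_map _ _
  hab ⟨q, by rw [hq]; simp +contextual⟩

lemma exists_notMem_compAvoiding (h : ¬ (G.induce Sᶜ).Preconnected) :
    ∃ a b, a ∉ S ∧ b ∉ S ∧ b ∉ compAvoiding G S a := by
  contrapose! h
  rintro ⟨a, ha⟩ ⟨b, hb⟩
  obtain ⟨p, hp⟩ := h a b ha hb
  exact ⟨p.induce Sᶜ hp⟩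

lemma compAvoiding_eq_of_subset (ha : a ∉ S) (hTS : T ⊆ S)
    (hT : ∀ c ∈ S, (∃ d ∈ compAvoiding G S a, G.Adj c d) → c ∈ T) :
    compAvoiding G T a = compAvoiding G S a := by
  refine subset_antisymm (compAvoiding_subset_of_closed (mem_compAvoiding_self ha) ?_)
    (compAvoiding_mono hTS)
  intro u hu w hwT h
  have hwS : w ∉ S := fun hwS => hwT (hT w hwS ⟨u, hu, h.symm⟩)
  exact mem_compAvoiding_of_adj hu hwS h

lemma exists_walk_through_compAvoiding {x y d₁ d₂ : V} (hd₁ : d₁ ∈ compAvoiding G S a)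
    (hd₂ : d₂ ∈ compAvoiding G S a) (hx : G.Adj x d₁) (hy : G.Adj y d₂) :
    ∃ p : G.Walk x y, wInterior G p ⊆ compAvoiding G S a := by
  obtain ⟨w, hw⟩ := mem_compAvoiding_trans (mem_compAvoiding_comm hd₁) hd₂
  refine ⟨cons hx (w.concat hy.symm), fun z ⟨hz, hzx, hzy⟩ => ?_⟩
  simp only [support_cons, support_concat, List.mem_cons, List.mem_append, List.not_mem_nil,
    or_false] at hz
  rcases hz with rfl | hz | rfl
  · exact absurd rfl hzx
  · exact mem_compAvoiding_trans hd₁ (support_subset_compAvoiding w hw z hz)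
  · exact absurd rfl hzy

end compAvoiding

/-- Passing from `C` to the vertices that see the component of `a`, and then to those that see the
component of `b`, changes neither component. -/
theorem exists_separator_with_full_components {C K : Set V} (hKC : K ⊆ C)
    (hC : ¬ (G.induce Cᶜ).Preconnected) :
    ∃ Y, K ⊆ Y ∧ Y ⊆ C ∧ ∃ a b, a ∉ Y ∧ b ∉ Y ∧ b ∉ compAvoiding G Y a ∧
      ∀ y ∈ Y, y ∉ K → (∃ d ∈ compAvoiding G Y a, G.Adj y d) ∧
        (∃ d ∈ compAvoiding G Y b, G.Adj y d) := by
  obtain ⟨a, b, ha, hb, hab⟩ := exists_notMem_compAvoiding hC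
  set X := {c ∈ C | c ∈ K ∨ ∃ d ∈ compAvoiding G C a, G.Adj c d}
  have hXC : X ⊆ C := fun c hc => hc.1
  have hXa : compAvoiding G X a = compAvoiding G C a :=
    compAvoiding_eq_of_subset ha hXC fun c hc h => ⟨hc, Or.inr h⟩
  have hba : a ∉ compAvoiding G X b := fun h => hab (hXa ▸ mem_compAvoiding_comm h)
  set Y := {c ∈ X | c ∈ K ∨ ∃ d ∈ compAvoiding G X b, G.Adj c d}
  have hYX : Y ⊆ X := fun c hc => hc.1
  have hYb : compAvoiding G Y b = compAvoiding G X b :=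
    compAvoiding_eq_of_subset (fun h => hb (hXC h)) hYX fun c hc h => ⟨hc, Or.inr h⟩
  refine ⟨Y, fun k hk => ⟨⟨hKC hk, Or.inl hk⟩, Or.inl hk⟩, hYX.trans hXC, a, b,
    fun h => ha (hXC (hYX h)), fun h => hb (hXC (hYX h)),
    fun h => hba (hYb ▸ mem_compAvoiding_comm h), ?_⟩
  rintro y ⟨⟨-, hyX⟩, hyY⟩ hyK
  obtain ⟨d, hd, hyd⟩ := hyX.resolve_left hyK
  obtain ⟨d', hd', hyd'⟩ := hyY.resolve_left hyK
  exact ⟨⟨d, compAvoiding_mono hYX (hXa ▸ hd), hyd⟩, ⟨d', hYb ▸ hd', hyd'⟩⟩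

lemma mem_wInterior_of_notMem_support {x y z : V} {p q : G.Walk x y} (hp : z ∈ p.support)
    (hq : z ∉ q.support) : z ∈ wInterior G p :=
  ⟨hp, fun h => hq (h ▸ q.start_mem_support), fun h => hq (h ▸ q.end_mem_support)⟩

lemma isChordless_append_reverse {x y : V} {P Q : G.Walk x y} (hP : P.IsChordless)
    (hQ : Q.IsChordless) (hanti : Anticomplete G (wInterior G P) (wInterior G Q)) :
    (P.append Q.reverse).IsChordless := by
  rw [isChordless_iff_forall_mem_edges]
  intro a b ha hb hab
  simp only [mem_support_append_iff, support_reverse, List.mem_reverse] at ha hb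
  simp only [edges_append, edges_reverse, List.mem_append, List.mem_reverse]
  by_cases haP : a ∈ P.support <;> by_cases hbP : b ∈ P.support
  · exact Or.inl (hP.mem_edges haP hbP hab)
  · have hbQ := hb.resolve_left hbP
    by_cases haQ : a ∈ Q.support
    · exact Or.inr (hQ.mem_edges haQ hbQ hab)
    · exact absurd hab (hanti a (mem_wInterior_of_notMem_support haP haQ) b
        (mem_wInterior_of_notMem_support hbQ hbP))
  · have haQ := ha.resolve_left haP
    by_cases hbQ : b ∈ Q.support
    · exact Or.inr (hQ.mem_edges haQ hbQ hab)
    · exact absurd hab.symm (hanti b (mem_wInterior_of_notMem_support hbP hbQ) a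
        (mem_wInterior_of_notMem_support haQ haP))
  · exact Or.inr (hQ.mem_edges (ha.resolve_left haP) (hb.resolve_left hbP) hab)

lemma isCycle_append_reverse {x y : V} {P Q : G.Walk x y} (hP : P.IsPath) (hQ : Q.IsPath)
    (hPl : 2 ≤ P.length) (hdisj : Disjoint (wInterior G P) (wInterior G Q)) :
    (P.append Q.reverse).IsCycle := by
  refine hP.isCycle_append hQ.reverse (List.disjoint_left.2 fun z hzP hzQ => ?_) (by omega)
  have hzx : z ≠ x := hP.ne_start_of_mem_support_tail hzP
  have hzy : z ≠ y := hQ.reverse.ne_start_of_mem_support_tail hzQ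
  have hzQ' : z ∈ Q.support := by
    simpa [support_reverse] using List.mem_of_mem_tail hzQ
  exact Set.disjoint_left.1 hdisj ⟨List.mem_of_mem_tail hzP, hzx, hzy⟩ ⟨hzQ', hzx, hzy⟩

theorem isHole_append_reverse {x y : V} {P Q : G.Walk x y} (hP : P.IsPath) (hQ : Q.IsPath)
    (hPc : P.IsChordless) (hQc : Q.IsChordless) (hPl : 2 ≤ P.length) (hQl : 2 ≤ Q.length)
    (hdisj : Disjoint (wInterior G P) (wInterior G Q))
    (hanti : Anticomplete G (wInterior G P) (wInterior G Q)) :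
    IsHole G {z | z ∈ (P.append Q.reverse).support} :=
  ⟨P.length + Q.length - 2 + 2, by omega, IsCycle.nonempty_iso_cycleGraph
    (isCycle_append_reverse hP hQ hPl hdisj) (isChordless_append_reverse hPc hQc hanti)
    (m := P.length + Q.length - 2) (by simp only [length_append, length_reverse]; omega)⟩

lemma inducedWalk_iff_isChordless {x y : V} {p : G.Walk x y} :
    InducedWalk G p ↔ p.IsChordless :=
  isChordless_iff_forall_mem_edges.symm

lemma wInterior_mono {x y : V} {p q : G.Walk x y} (h : p.support ⊆ q.support) :
    wInterior G p ⊆ wInterior G q :=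
  fun _ ⟨hz, hzx, hzy⟩ => ⟨h hz, hzx, hzy⟩

lemma two_le_length_of_not_adj {x y : V} (hne : x ≠ y) (hxy : ¬ G.Adj x y) (p : G.Walk x y) :
    2 ≤ p.length := by
  rcases p with _ | ⟨h, _ | ⟨_, _⟩⟩
  · exact absurd rfl hne
  · exact absurd h hxy
  · simp

lemma containsTheta_of_common_nbr {x y v : V} {P Q : G.Walk x y} (hP : P.IsPath)
    (hQ : Q.IsPath) (hPc : P.IsChordless) (hQc : Q.IsChordless) (hPl : 2 ≤ P.length)
    (hQl : 2 ≤ Q.length) (hdisj : Disjoint (wInterior G P) (wInterior G Q))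
    (hanti : Anticomplete G (wInterior G P) (wInterior G Q)) (hvx : G.Adj v x)
    (hvy : G.Adj v y) (hne : x ≠ y) (hxy : ¬ G.Adj x y) (hvP : v ∉ wInterior G P)
    (hvQ : v ∉ wInterior G Q) (hPv : ∀ z ∈ wInterior G P, ¬ G.Adj z v)
    (hQv : ∀ z ∈ wInterior G Q, ¬ G.Adj z v) :
    ContainsTheta G := by
  have hxv : x ≠ v := hvx.ne'
  have hvy' : v ≠ y := hvy.ne
  let R : G.Walk x y := cons hvx.symm (cons hvy nil)
  have hR : R.IsPath := by simp [R, hxv, hne, hvy']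
  have hRc : R.IsChordless := by
    rw [isChordless_iff_forall_mem_edges]
    intro a b ha hb hab
    simp only [R, support_cons, support_nil, List.mem_cons, List.not_mem_nil, or_false] at ha hb
    rcases ha with rfl | rfl | rfl <;> rcases hb with rfl | rfl | rfl <;>
      simp_all [R, Sym2.eq_swap, G.adj_comm]
  have hRint : wInterior G R = {v} := by
    ext z
    simp only [wInterior, R, support_cons, support_nil, List.mem_cons, List.not_mem_nil,
      or_false, Set.mem_ofPred_eq, Set.mem_singleton_iff]
    constructor
    · rintro ⟨rfl | rfl | rfl, hzx, hzy⟩ <;> simp_all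
    · rintro rfl; exact ⟨Or.inr (Or.inl rfl), hxv.symm, hvy'⟩
  refine ⟨x, y, P, Q, R, hxy, hP, hQ, hR, inducedWalk_iff_isChordless.2 hPc,
    inducedWalk_iff_isChordless.2 hQc, inducedWalk_iff_isChordless.2 hRc, hPl, hQl,
    by simp [R], hdisj, ?_, ?_, hanti, ?_, ?_⟩ <;> rw [hRint]
  · exact Set.disjoint_singleton_right.2 hvP
  · exact Set.disjoint_singleton_right.2 hvQ
  · rintro z hz _ rfl; exact hPv z hz
  · rintro z hz _ rfl; exact hQv z hz

lemma isWheel_of_isHole (htri : G.CliqueFree 3) {H : Set V} (hH : IsHole G H) {v x y z : V}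
    (hx : x ∈ H) (hy : y ∈ H) (hz : z ∈ H) (hvx : G.Adj v x) (hvy : G.Adj v y)
    (hvz : G.Adj v z) (hne : x ≠ y) (hxy : ¬ G.Adj x y) (hzx : z ≠ x) (hzy : z ≠ y) :
    IsWheel G H v :=
  ⟨hH, x, y, z, ⟨hx, hvx⟩, ⟨hy, hvy⟩, ⟨hz, hvz⟩, hne, hzx.symm, hzy.symm, hxy,
    isIndepSet_neighborSet_of_triangleFree G htri v hvx hvz hzx.symm,
    isIndepSet_neighborSet_of_triangleFree G htri v hvy hvz hzy.symm⟩

theorem containsTheta_or_isWheel (htri : G.CliqueFree 3) {v x y : V} (hvx : G.Adj v x)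
    (hvy : G.Adj v y) (hne : x ≠ y) (hxy : ¬ G.Adj x y) {A B : Set V} (hAB : Disjoint A B)
    (hanti : Anticomplete G A B) (hvA : v ∉ A) (hvB : v ∉ B) {p q : G.Walk x y}
    (hp : wInterior G p ⊆ A) (hq : wInterior G q ⊆ B) :
    ContainsTheta G ∨ ∃ H w, IsWheel G H w := by
  obtain ⟨P, hP, hPc, hPp⟩ := p.exists_isPath_isChordless_support_subset
  obtain ⟨Q, hQ, hQc, hQq⟩ := q.exists_isPath_isChordless_support_subset
  have hPA : wInterior G P ⊆ A := (wInterior_mono hPp).trans hp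
  have hQB : wInterior G Q ⊆ B := (wInterior_mono hQq).trans hq
  have hPl := two_le_length_of_not_adj hne hxy P
  have hQl := two_le_length_of_not_adj hne hxy Q
  have hdisj : Disjoint (wInterior G P) (wInterior G Q) := hAB.mono hPA hQB
  have hanti' : Anticomplete G (wInterior G P) (wInterior G Q) :=
    fun a ha b hb => hanti a (hPA ha) b (hQB hb)
  by_cases hz : ∃ z, (z ∈ wInterior G P ∨ z ∈ wInterior G Q) ∧ G.Adj v z
  · obtain ⟨z, hzPQ, hvz⟩ := hz
    have hzH : z ∈ {z | z ∈ (P.append Q.reverse).support} := by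
      rcases hzPQ with h | h <;> simp [mem_support_append_iff, h.1]
    have hzxy : z ≠ x ∧ z ≠ y := by rcases hzPQ with h | h <;> exact ⟨h.2.1, h.2.2⟩
    exact Or.inr ⟨_, v, isWheel_of_isHole htri
      (isHole_append_reverse hP hQ hPc hQc hPl hQl hdisj hanti')
      (P.append Q.reverse).start_mem_support (by simp [mem_support_append_iff]) hzH
      hvx hvy hvz hne hxy hzxy.1 hzxy.2⟩
  · push Not at hz
    exact Or.inl (containsTheta_of_common_nbr hP hQ hPc hQc hPl hQl hdisj hanti' hvx hvy hne
      hxy (fun h => hvA (hPA h)) (fun h => hvB (hQB h))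
      (fun z hz' h => hz z (Or.inl hz') h.symm) (fun z hz' h => hz z (Or.inr hz') h.symm))

lemma adj_of_mem_closedNbr {v x y : V} (hx : x ∈ closedNbr G v) (hy : y ∈ closedNbr G v)
    (hne : x ≠ y) (hxy : ¬ G.Adj x y) : G.Adj v x := by
  rcases hx with rfl | hx
  · rcases hy with rfl | hy
    exacts [absurd rfl hne, absurd hy hxy]
  · exact hx

theorem stmt5_general {V : Type} (G : SimpleGraph V)
    (ht : ¬ ContainsTheta G) (htri : G.CliqueFree 3)
    (hw : ∀ (H : Set V) (v : V), ¬ IsWheel G H v)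
    (hcc : ¬ HasCliqueCutset G) :
    ¬ ∃ (v : V) (C : Set V), v ∈ C ∧ C ⊆ closedNbr G v ∧
      ¬ (G.induce Cᶜ).Preconnected := by
  rintro ⟨v, C, hvC, hCv, hC⟩
  obtain ⟨Y, hvY, hYC, a, b, ha, hb, hab, hfull⟩ :=
    exists_separator_with_full_components (Set.singleton_subset_iff.2 hvC) hC
  obtain ⟨x, hx, y, hy, hne, hxy⟩ : ∃ x ∈ Y, ∃ y ∈ Y, x ≠ y ∧ ¬ G.Adj x y := by
    by_contra! h
    exact hcc ⟨Y, h, not_preconnected_induce_compl ha hb hab⟩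
  have hYv : Y ⊆ closedNbr G v := hYC.trans hCv
  have hvx := adj_of_mem_closedNbr (hYv hx) (hYv hy) hne hxy
  have hvy := adj_of_mem_closedNbr (hYv hy) (hYv hx) hne.symm (fun h => hxy h.symm)
  obtain ⟨⟨dx, hdx, hxdx⟩, ⟨ex, hex, hxex⟩⟩ := hfull x hx hvx.ne'
  obtain ⟨⟨dy, hdy, hydy⟩, ⟨ey, hey, hyey⟩⟩ := hfull y hy hvy.ne'
  obtain ⟨p, hp⟩ := exists_walk_through_compAvoiding hdx hdy hxdx hydy
  obtain ⟨q, hq⟩ := exists_walk_through_compAvoiding hex hey hxex hyey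
  have hvY' : v ∈ Y := hvY rfl
  rcases containsTheta_or_isWheel htri hvx hvy hne hxy (disjoint_compAvoiding hab)
    (anticomplete_compAvoiding hab) (fun h => notMem_of_mem_compAvoiding h hvY')
    (fun h => notMem_of_mem_compAvoiding h hvY') hp hq with h | ⟨H, w, h⟩
  exacts [ht h, hw H w h]

/-- A connected (theta, triangle, wheel)-free graph with no clique cutset has
no star cutset. -/
theorem stmt5 {V : Type} [Fintype V] (G : SimpleGraph V) (hconn : G.Connected)
    (ht : ¬ ContainsTheta G) (htri : G.CliqueFree 3)
    (hw : ∀ (H : Set V) (v : V), ¬ IsWheel G H v)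
    (hcc : ¬ HasCliqueCutset G) :
    ¬ ∃ (v : V) (C : Set V), v ∈ C ∧ C ⊆ closedNbr G v ∧
      ¬ (G.induce Cᶜ).Preconnected :=
  stmt5_general G ht htri hw hcc

end Paper
end

section
/- Let G be a (C4, diamond)-free graph with no clique cutset, let v1, v2 be vertices, and let S1 = (A1, C1, B1), S2 = (A2, C2, B2) be star separations of G such that for i = 1, 2: vi is in Ci, Ci is contained in N[vi], Bi is connected, and N(Bi) = Ci \ {vi}. Suppose v2 is in A1 and B2 intersects B1 ∪ (C1 \ {v1}). Then B1 ∪ C1 is contained in B2 ∪ C2. -/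
open SimpleGraph Set

namespace Paper

variable {V : Type} {W : Type}

section StmtSixHelpers

variable {V : Type}

private lemma walk_confined (G : SimpleGraph V) {S X Y : Set V}
    (hS : S ⊆ X ∪ Y) (hanti : Anticomplete G X Y)
    {u w : ↥S} (p : (G.induce S).Walk u w) (hu : (u : V) ∈ X) : (w : V) ∈ X := by
  induction p with
  | nil => exact hu
  | @cons x y z h p ih =>
    have hadj : G.Adj (x : V) (y : V) := h
    rcases hS y.2 with hy | hy
    · exact ih hy
    · exact absurd hadj (hanti x hu y hy)

private lemma no_path (G : SimpleGraph V) {X Y : Set V} (hanti : Anticomplete G X Y)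
    (hXY : Disjoint X Y) {x y : V} (hx : x ∈ X) (hy : y ∈ Y)
    {S : Set V} (hSsub : S ⊆ X ∪ Y) (hxS : x ∈ S) (hyS : y ∈ S)
    (hr : (G.induce S).Reachable ⟨x, hxS⟩ ⟨y, hyS⟩) : False := by
  obtain ⟨p⟩ := hr
  exact Set.disjoint_left.mp hXY (walk_confined G hSsub hanti p hx) hy

private lemma hfree_four {G : SimpleGraph V} {H : SimpleGraph (Fin 4)}
    (hfree : HFree G H) (a b c d : V)
    (hab : a ≠ b) (hac : a ≠ c) (had : a ≠ d) (hbc : b ≠ c) (hbd : b ≠ d) (hcd : c ≠ d)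
    (e01 : G.Adj a b ↔ H.Adj 0 1) (e02 : G.Adj a c ↔ H.Adj 0 2)
    (e03 : G.Adj a d ↔ H.Adj 0 3) (e12 : G.Adj b c ↔ H.Adj 1 2)
    (e13 : G.Adj b d ↔ H.Adj 1 3) (e23 : G.Adj c d ↔ H.Adj 2 3) : False := by
  classical
  set s : Set V := {a, b, c, d} with hs
  have hma : a ∈ s := by simp [hs]
  have hmb : b ∈ s := by simp [hs]
  have hmc : c ∈ s := by simp [hs]
  have hmd : d ∈ s := by simp [hs]
  let f : Fin 4 → ↥s := fun i =>
    match i with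
    | 0 => ⟨a, hma⟩
    | 1 => ⟨b, hmb⟩
    | 2 => ⟨c, hmc⟩
    | 3 => ⟨d, hmd⟩
  have hbij : Function.Bijective f := by
    constructor
    · intro i j hij
      fin_cases i <;> fin_cases j <;>
        simp_all [f, Subtype.ext_iff] <;> first | rfl | (exfalso; tauto)
    · rintro ⟨x, hx⟩
      rcases hx with rfl | rfl | rfl | rfl
      · exact ⟨0, rfl⟩
      · exact ⟨1, rfl⟩
      · exact ⟨2, rfl⟩
      · exact ⟨3, rfl⟩
  have flip : ∀ {x y : V} {i j : Fin 4}, (G.Adj x y ↔ H.Adj i j) →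
      (G.Adj y x ↔ H.Adj j i) := fun {x y i j} h =>
    ((G.adj_comm y x).trans h).trans (H.adj_comm i j)
  have iso : H ≃g G.induce s :=
    { toEquiv := Equiv.ofBijective f hbij
      map_rel_iff' := by
        intro i j
        show (G.induce s).Adj (f i) (f j) ↔ H.Adj i j
        fin_cases i <;> fin_cases j <;>
          (show G.Adj _ _ ↔ H.Adj _ _) <;>
          first
            | exact iff_of_false (G.irrefl) (H.irrefl)
            | exact e01 | exact e02 | exact e03 | exact e12 | exact e13 | exact e23
            | exact flip e01 | exact flip e02 | exact flip e03
            | exact flip e12 | exact flip e13 | exact flip e23 }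
  exact hfree s ⟨iso.symm⟩

private lemma diamond_adj_iff (i j : Fin 4) :
    diamond.Adj i j ↔ i ≠ j ∧ s(i, j) ≠ s((0 : Fin 4), (1 : Fin 4)) := by
  simp only [diamond, SimpleGraph.fromRel_adj]
  constructor
  · rintro ⟨hne, h | h⟩
    · exact ⟨hne, h⟩
    · exact ⟨hne, by rwa [Sym2.eq_swap]⟩
  · rintro ⟨hne, h⟩
    exact ⟨hne, Or.inl h⟩

end StmtSixHelpers

/-- the shield lemma for star separations in (C4, diamond)-free graphs with no
clique cutset. -/
theorem stmt6 {V : Type} (G : SimpleGraph V)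
    (hC4 : HFree G (SimpleGraph.cycleGraph 4)) (hdia : HFree G diamond)
    (hcc : ¬ HasCliqueCutset G)
    (v₁ v₂ : V) (A₁ C₁ B₁ A₂ C₂ B₂ : Set V)
    (hS1 : IsSeparation G A₁ C₁ B₁) (hS2 : IsSeparation G A₂ C₂ B₂)
    (hv1 : v₁ ∈ C₁) (hC1 : C₁ ⊆ closedNbr G v₁)
    (hB1conn : (G.induce B₁).Connected) (hN1 : setNbr G B₁ = C₁ \ {v₁})
    (hv2 : v₂ ∈ C₂) (hC2 : C₂ ⊆ closedNbr G v₂)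
    (hB2conn : (G.induce B₂).Connected) (hN2 : setNbr G B₂ = C₂ \ {v₂})
    (hv2A : v₂ ∈ A₁) (hint : (B₂ ∩ (B₁ ∪ (C₁ \ {v₁}))).Nonempty) :
    B₁ ∪ C₁ ⊆ B₂ ∪ C₂ := by
  classical
  obtain ⟨hU1, hA1C1, hA1B1, hC1B1, hanti1⟩ := hS1
  obtain ⟨hU2, hA2C2, hA2B2, hC2B2, hanti2⟩ := hS2
  have hdj : ∀ {X Y : Set V}, Disjoint X Y → ∀ {x : V}, x ∈ X → x ∈ Y → False :=
    by intro X Y h x hx hy; exact Set.disjoint_left.mp h hx hy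
  have htri1 : ∀ x : V, x ∈ A₁ ∨ x ∈ C₁ ∨ x ∈ B₁ := by
    intro x
    have : x ∈ A₁ ∪ C₁ ∪ B₁ := hU1 ▸ Set.mem_univ x
    simpa [Set.mem_union, or_assoc] using this
  have htri2 : ∀ x : V, x ∈ A₂ ∨ x ∈ C₂ ∨ x ∈ B₂ := by
    intro x
    have : x ∈ A₂ ∪ C₂ ∪ B₂ := hU2 ▸ Set.mem_univ x
    simpa [Set.mem_union, or_assoc] using this
  have hadjv2 : ∀ c ∈ C₂, c ≠ v₂ → G.Adj v₂ c := by
    intro c hc hne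
    rcases hC2 hc with h | h
    · exact absurd h hne
    · exact h
  have hadjv1 : ∀ c ∈ C₁, c ≠ v₁ → G.Adj v₁ c := by
    intro c hc hne
    rcases hC1 hc with h | h
    · exact absurd h hne
    · exact h
  -- C₂ ⊆ A₁ ∪ C₁
  have hC2sub : ∀ c ∈ C₂, c ∈ A₁ ∨ c ∈ C₁ := by
    intro c hc
    by_cases h : c = v₂
    · exact Or.inl (h ▸ hv2A)
    · rcases htri1 c with h1 | h1 | h1
      · exact Or.inl h1
      · exact Or.inr h1
      · exact absurd (hadjv2 c hc h) (hanti1 v₂ hv2A c h1)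
  have hB1C2 : ∀ x ∈ B₁, x ∉ C₂ := by
    intro x hx hc
    rcases hC2sub x hc with h | h
    · exact hdj hA1B1 h hx
    · exact hdj hC1B1 h hx
  have hB1s : B₁ ⊆ A₂ ∪ B₂ := by
    intro x hx
    rcases htri2 x with h | h | h
    · exact Or.inl h
    · exact absurd h (hB1C2 x hx)
    · exact Or.inr h
  -- B₁ meets B₂
  have hBB : ∃ y, y ∈ B₁ ∧ y ∈ B₂ := by
    obtain ⟨u, huB2, hu⟩ := hint
    rcases hu with hu | hu
    · exact ⟨u, hu, huB2⟩
    · rw [← hN1] at hu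
      obtain ⟨-, b, hbB1, hadj⟩ := hu
      refine ⟨b, hbB1, ?_⟩
      rcases htri2 b with h | h | h
      · exact absurd hadj (hanti2 b h u huB2)
      · exact absurd h (hB1C2 b hbB1)
      · exact h
  obtain ⟨y, hyB1, hyB2⟩ := hBB
  -- B₁ ⊆ B₂
  have hB1B2 : B₁ ⊆ B₂ := by
    intro x hx
    rcases hB1s hx with h | h
    · exact absurd (hB1conn.preconnected ⟨x, hx⟩ ⟨y, hyB1⟩)
        (fun hr => no_path G hanti2 hA2B2 h hyB2 hB1s hx hyB1 hr)
    · exact h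
  -- C₁ \ {v₁} ⊆ B₂ ∪ C₂
  have hC1m : ∀ c ∈ C₁, c ≠ v₁ → c ∈ B₂ ∪ C₂ := by
    intro c hc hne
    have hmem : c ∈ setNbr G B₁ := by rw [hN1]; exact ⟨hc, hne⟩
    obtain ⟨-, b, hbB1, hadj⟩ := hmem
    rcases htri2 c with h | h | h
    · exact absurd hadj.symm (hanti2 c h b (hB1B2 hbB1))
    · exact Or.inr h
    · exact Or.inl h
  -- v₁ ∈ B₂ ∪ C₂
  have hv1v2 : v₁ ≠ v₂ := fun h => hdj hA1C1 hv2A (h ▸ hv1)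
  have hv1mem : v₁ ∈ B₂ ∪ C₂ := by
    by_contra hv1n
    have hv1A2 : v₁ ∈ A₂ := by
      rcases htri2 v₁ with h | h | h
      · exact h
      · exact absurd (Or.inr h : v₁ ∈ B₂ ∪ C₂) hv1n
      · exact absurd (Or.inl h : v₁ ∈ B₂ ∪ C₂) hv1n
    have hC1C2 : ∀ c ∈ C₁, c ≠ v₁ → c ∈ C₂ := by
      intro c hc hne
      rcases hC1m c hc hne with h | h
      · exact absurd (hadjv1 c hc hne) (hanti2 v₁ hv1A2 c h)
      · exact h
    have hadjv2' : ∀ c ∈ C₁, c ≠ v₁ → G.Adj v₂ c := by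
      intro c hc hne
      exact hadjv2 c (hC1C2 c hc hne) (fun h => hdj hA1C1 (h ▸ hv2A) hc)
    have hclique : G.IsClique C₁ := by
      intro p hp q hq hpq
      by_cases hp1 : p = v₁
      · subst hp1; exact hadjv1 q hq (fun h => hpq h.symm)
      by_cases hq1 : q = v₁
      · subst hq1; exact (hadjv1 p hp hp1).symm
      by_contra hnadj
      by_cases hv12 : G.Adj v₁ v₂
      · -- diamond on p,q,v₁,v₂ (missing edge p-q)
        refine hfree_four hdia p q v₁ v₂ hpq hp1
          (fun h => hdj hA1C1 (h ▸ hv2A) hp) hq1 (fun h => hdj hA1C1 (h ▸ hv2A) hq) hv1v2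
          ?_ ?_ ?_ ?_ ?_ ?_ <;> rw [diamond_adj_iff]
        · exact iff_of_false hnadj (by decide)
        · exact iff_of_true (hadjv1 p hp hp1).symm (by decide)
        · exact iff_of_true (hadjv2' p hp hp1).symm (by decide)
        · exact iff_of_true (hadjv1 q hq hq1).symm (by decide)
        · exact iff_of_true (hadjv2' q hq hq1).symm (by decide)
        · exact iff_of_true hv12 (by decide)
      · -- C4: p - v₁ - q - v₂ - p
        refine hfree_four hC4 p v₁ q v₂
          (fun h => hp1 h) hpq (fun h => hdj hA1C1 (h ▸ hv2A) hp)
          (fun h => hq1 h.symm) hv1v2 (fun h => hdj hA1C1 (h ▸ hv2A) hq)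
          ?_ ?_ ?_ ?_ ?_ ?_
        · exact iff_of_true (hadjv1 p hp hp1).symm (by decide)
        · exact iff_of_false hnadj (by decide)
        · exact iff_of_true (hadjv2' p hp hp1).symm (by decide)
        · exact iff_of_true (hadjv1 q hq hq1) (by decide)
        · exact iff_of_false hv12 (by decide)
        · exact iff_of_true (hadjv2' q hq hq1).symm (by decide)
    refine hcc ⟨C₁, hclique, fun hpre => ?_⟩
    have hv2c : v₂ ∈ C₁ᶜ := fun h => hdj hA1C1 hv2A h
    have hyc : y ∈ C₁ᶜ := fun h => hdj hC1B1 h hyB1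
    have hsub : (C₁ᶜ : Set V) ⊆ A₁ ∪ B₁ := by
      intro x hx
      rcases htri1 x with h | h | h
      · exact Or.inl h
      · exact absurd h hx
      · exact Or.inr h
    exact no_path G hanti1 hA1B1 hv2A hyB1 hsub hv2c hyc (hpre ⟨v₂, hv2c⟩ ⟨y, hyc⟩)
  intro x hx
  rcases hx with hx | hx
  · exact Or.inl (hB1B2 hx)
  · by_cases h : x = v₁
    · exact h ▸ hv1mem
    · exact hC1m x hx h

end Paper
end

section
/- Let G be a (C4, diamond)-free graph with no clique cutset, let w be a weight function on V(G) with total weight 1, and let U be the set of unbalanced vertices (vertices v for which some component of G \ N[v] has weight greater than 1/2). For v in U define the canonical star separation S_v = (A_v, C_v, B_v), where B_v is the largest-weight component of G \ N[v], C_v = {v} ∪ (N(v) ∩ N(B_v)), and A_v = V(G) \ (B_v ∪ C_v). Define the relation ≤_A on U by x ≤_A y iff x = y or y ∈ A_x. Then ≤_A is a partial order on U. -/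
open SimpleGraph Set

namespace Paper

variable {V : Type} {W : Type}

/- If `y ∈ A_x` then `B_x` avoids `N[y]`, so it lies in a component of `G \ N[y]` of weight more
than `1/2`, which must be `B_y`; hence `B_x ⊆ B_y` and `N[B_x] ⊆ N[B_y]`, and transitivity
follows. If also `x ∈ A_y`, then `B_x = B_y`, and `N(B_x)` lies in the common neighbourhood of
`x` and `y`. In a (C4, diamond)-free graph two distinct vertices have a clique as common
neighbourhood, so `N(B_x)` would be a clique cutset separating `B_x` from `x`. -/

section Components

variable {G : SimpleGraph V} {S D : Set V}

lemma IsComponentOf.mem_of_adj (hD : IsComponentOf G S D) {u v : V} (hu : u ∈ D)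
    (huv : G.Adj u v) (hv : v ∈ S) : v ∈ D := by
  have hconn : (G.induce (insert v D)).Connected := by
    have h := connected_induce_union (G := G) (s := {v}) (t := D)
      Preconnected.of_subsingleton hD.2.2.1.preconnected
      (mem_singleton v) hu huv.symm
    rwa [singleton_union] at h
  rw [← hD.2.2.2 _ (subset_insert v D) (insert_subset hv hD.2.1) hconn]
  exact mem_insert v D

lemma IsComponentOf.eq_of_not_disjoint {D' : Set V} (hD : IsComponentOf G S D)
    (hD' : IsComponentOf G S D') (h : ¬ Disjoint D D') : D = D' := by
  have hconn := induce_union_connected hD.2.2.1.preconnected hD'.2.2.1.preconnected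
    (not_disjoint_iff_nonempty_inter.mp h)
  have hsub : D ∪ D' ⊆ S := union_subset hD.2.1 hD'.2.1
  rw [← hD.2.2.2 _ subset_union_left hsub hconn, hD'.2.2.2 _ subset_union_right hsub hconn]

lemma exists_isComponentOf_superset [Finite V] {X : Set V} (hX : X.Nonempty) (hXS : X ⊆ S)
    (hXc : (G.induce X).Connected) : ∃ D, IsComponentOf G S D ∧ X ⊆ D := by
  obtain ⟨D, ⟨hXD, hDS, hDc⟩, hmax⟩ := Set.Finite.exists_maximalFor ncard
    {D | X ⊆ D ∧ D ⊆ S ∧ (G.induce D).Connected} (toFinite _) ⟨X, subset_rfl, hXS, hXc⟩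
  refine ⟨D, ⟨hX.mono hXD, hDS, hDc, fun D' hDD' hD'S hD'c => ?_⟩, hXD⟩
  have hcard := hmax ⟨hXD.trans hDD', hD'S, hD'c⟩ (ncard_le_ncard hDD')
  exact (eq_of_subset_of_ncard_le hDD' hcard).symm

lemma IsComponentOf.setNbr_subset_neighborSet {x : V}
    (hD : IsComponentOf G (closedNbr G x)ᶜ D) : setNbr G D ⊆ G.neighborSet x := by
  rintro c ⟨hcD, b, hb, hbc⟩
  have hc : c ∈ closedNbr G x := by
    by_contra hc
    exact hcD (hD.mem_of_adj hb hbc hc)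
  rcases hc with rfl | hc
  · exact absurd (mem_insert_of_mem _ hbc.symm) (hD.2.1 hb)
  · exact hc

end Components

lemma closedNbrSet_mono {G : SimpleGraph V} {X Y : Set V} (h : X ⊆ Y) :
    closedNbrSet G X ⊆ closedNbrSet G Y := by
  rintro v (hv | ⟨-, x, hx, hxv⟩)
  · exact Or.inl (h hv)
  · by_cases hvY : v ∈ Y
    · exact Or.inl hvY
    · exact Or.inr ⟨hvY, x, h hx, hxv⟩

lemma hasCliqueCutset_of_isClique_setNbr {G : SimpleGraph V} {D : Set V} {x : V}
    (hD : D.Nonempty) (hx : x ∉ closedNbrSet G D) (hK : G.IsClique (setNbr G D)) :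
    HasCliqueCutset G := by
  refine ⟨setNbr G D, hK, fun hpre => ?_⟩
  obtain ⟨b, hb⟩ := hD
  obtain ⟨p⟩ := hpre ⟨b, fun h => h.1 hb⟩ ⟨x, fun h => hx (Or.inr h)⟩
  have hstay : ∀ {u v : ↥(setNbr G D)ᶜ} (q : (G.induce (setNbr G D)ᶜ).Walk u v),
      (u : V) ∈ D → (v : V) ∈ D := by
    intro u v q
    induction q with
    | nil => exact id
    | @cons u v _ hadj _ ih => exact fun hu => ih (by_contra fun h => v.2 ⟨h, u, hu, hadj⟩)
  exact hx (Or.inl (hstay p hb))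

section Weights

variable {w : V → ℝ}

lemma fweight_nonneg (hw : ∀ v, 0 ≤ w v) (X : Set V) : 0 ≤ fweight w X :=
  finsum_nonneg fun v => finsum_nonneg fun _ => hw v

variable [Finite V]

lemma fweight_union {X Y : Set V} (h : Disjoint X Y) :
    fweight w (X ∪ Y) = fweight w X + fweight w Y :=
  finsum_mem_union h (toFinite X) (toFinite Y)

lemma fweight_mono (hw : ∀ v, 0 ≤ w v) {X Y : Set V} (h : X ⊆ Y) :
    fweight w X ≤ fweight w Y := by
  rw [← union_sdiff_cancel h, fweight_union disjoint_sdiff_right]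
  linarith [fweight_nonneg hw (Y \ X)]

lemma not_disjoint_of_half_lt_fweight (hw : ∀ v, 0 ≤ w v) (hwt : fweight w univ = 1)
    {X Y : Set V} (hX : 1 / 2 < fweight w X) (hY : 1 / 2 < fweight w Y) : ¬ Disjoint X Y := by
  intro h
  have := fweight_mono hw (subset_univ (X ∪ Y))
  rw [fweight_union h, hwt] at this
  linarith

end Weights

section ForbiddenSubgraphs

variable {G : SimpleGraph V}

lemma HFree.comap_ne {H : SimpleGraph W} (hH : HFree G H) {f : W → V} (hf : f.Injective) :
    G.comap f ≠ H := by
  intro hfH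
  obtain ⟨s, ⟨e⟩⟩ := isIndContained_iff_exists_iso_induce.mp
    (isIndContained_iff_exists_comap_eq.mpr ⟨⟨f, hf⟩, hfH⟩)
  exact hH s ⟨e.symm⟩

lemma HFree.not_induced_c4 (hC4 : HFree G (cycleGraph 4)) {a b c d : V}
    (hab : G.Adj a b) (hbc : G.Adj b c) (hcd : G.Adj c d) (hda : G.Adj d a)
    (hac : ¬ G.Adj a c) (hbd : ¬ G.Adj b d) (hac' : a ≠ c) (hbd' : b ≠ d) : False := by
  refine hC4.comap_ne (f := ![a, b, c, d]) (fun i j hij => ?_) ?_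
  · fin_cases i <;> fin_cases j <;>
      simp_all [hab.ne, hbc.ne, hcd.ne, hda.ne, hab.ne', hbc.ne', hcd.ne', hda.ne', hac'.symm,
        hbd'.symm]
  · ext i j
    fin_cases i <;> fin_cases j <;>
      simp [cycleGraph_adj, hab, hbc, hcd, hda, hab.symm, hbc.symm, hcd.symm, hda.symm, hac, hbd,
        G.adj_comm c a, G.adj_comm d b] <;> decide

lemma HFree.not_induced_diamond (hdia : HFree G diamond) {u v x y : V}
    (hux : G.Adj u x) (huy : G.Adj u y) (hvx : G.Adj v x) (hvy : G.Adj v y)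
    (hxy : G.Adj x y) (huv : ¬ G.Adj u v) (huv' : u ≠ v) : False := by
  refine hdia.comap_ne (f := ![u, v, x, y]) (fun i j hij => ?_) ?_
  · fin_cases i <;> fin_cases j <;>
      simp_all [hux.ne, huy.ne, hvx.ne, hvy.ne, hxy.ne, hux.ne', huy.ne', hvx.ne', hvy.ne',
        hxy.ne', huv'.symm]
  · ext i j
    fin_cases i <;> fin_cases j <;>
      simp [diamond, fromRel_adj, hux, huy, hvx, hvy, hxy, hux.symm, huy.symm, hvx.symm, hvy.symm,
        hxy.symm, huv, G.adj_comm v u]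

end ForbiddenSubgraphs

lemma isClique_commonNeighbors {G : SimpleGraph V} (hC4 : HFree G (cycleGraph 4))
    (hdia : HFree G diamond) {x y : V} (hxy : x ≠ y) : G.IsClique (G.commonNeighbors x y) := by
  rintro u ⟨hxu, hyu⟩ v ⟨hxv, hyv⟩ huv
  by_contra hnuv
  by_cases hadj : G.Adj x y
  · exact hdia.not_induced_diamond hxu.symm hyu.symm hxv.symm hyv.symm hadj hnuv huv
  · exact hC4.not_induced_c4 hxu hyu.symm hyv hxv.symm hadj hnuv hxy huv

lemma eq_of_isComponentOf_closedNbr_compl {G : SimpleGraph V} (hC4 : HFree G (cycleGraph 4))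
    (hdia : HFree G diamond) (hcc : ¬ HasCliqueCutset G) {D : Set V} {x y : V}
    (hx : IsComponentOf G (closedNbr G x)ᶜ D) (hy : IsComponentOf G (closedNbr G y)ᶜ D) :
    x = y := by
  by_contra hxy
  have hK : setNbr G D ⊆ G.commonNeighbors x y := fun u hu =>
    ⟨hx.setNbr_subset_neighborSet hu, hy.setNbr_subset_neighborSet hu⟩
  refine hcc (hasCliqueCutset_of_isClique_setNbr (x := x) hx.1 ?_
    ((isClique_commonNeighbors hC4 hdia hxy).subset hK))
  rintro (hxD | hxN)
  · exact hx.2.1 hxD (mem_insert x _)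
  · exact G.irrefl (hx.setNbr_subset_neighborSet hxN)

section Heavy

variable [Finite V] {G : SimpleGraph V} {w : V → ℝ}

lemma IsComponentOf.eq_of_half_lt_fweight (hw : ∀ v, 0 ≤ w v) (hwt : fweight w univ = 1)
    {S D D' : Set V} (hD : IsComponentOf G S D) (hD' : IsComponentOf G S D')
    (hDw : 1 / 2 < fweight w D) (hD'w : 1 / 2 < fweight w D') : D = D' :=
  hD.eq_of_not_disjoint hD' (not_disjoint_of_half_lt_fweight hw hwt hDw hD'w)

lemma subset_of_notMem_closedNbrSet (hw : ∀ v, 0 ≤ w v) (hwt : fweight w univ = 1)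
    {X D : Set V} {y : V} (hX : X.Nonempty) (hXc : (G.induce X).Connected)
    (hXw : 1 / 2 < fweight w X) (hD : IsComponentOf G (closedNbr G y)ᶜ D)
    (hDw : 1 / 2 < fweight w D) (hy : y ∉ closedNbrSet G X) : X ⊆ D := by
  have hXy : X ⊆ (closedNbr G y)ᶜ := by
    rintro b hb (rfl | hyb)
    · exact hy (Or.inl hb)
    · exact hy (Or.inr ⟨fun h => hy (Or.inl h), b, hb, hyb.symm⟩)
  obtain ⟨D', hD', hXD'⟩ := exists_isComponentOf_superset hX hXy hXc
  exact hD'.eq_of_half_lt_fweight hw hwt hD (hXw.trans_le (fweight_mono hw hXD')) hDw ▸ hXD'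

end Heavy

lemma IsComponentOf.union_insert_inter_setNbr {G : SimpleGraph V} {B : Set V} {x : V}
    (hB : IsComponentOf G (closedNbr G x)ᶜ B) :
    B ∪ insert x (G.neighborSet x ∩ setNbr G B) = insert x (closedNbrSet G B) := by
  rw [inter_eq_right.mpr hB.setNbr_subset_neighborSet, closedNbrSet, union_insert]

/-- the relation ≤_A induced by canonical star separations of unbalanced
vertices is a partial order. -/
theorem stmt7 {V : Type} [Fintype V] (G : SimpleGraph V)
    (hC4 : HFree G (SimpleGraph.cycleGraph 4)) (hdia : HFree G diamond)
    (hcc : ¬ HasCliqueCutset G)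
    (w : V → ℝ) (hw : ∀ v, 0 ≤ w v ∧ w v ≤ 1) (hwt : fweight w Set.univ = 1)
    (U : Set V)
    (hU : U = {v | ∃ D, IsComponentOf G ((closedNbr G v)ᶜ) D ∧ 1/2 < fweight w D})
    (B C A : V → Set V)
    (hB : ∀ v ∈ U, IsComponentOf G ((closedNbr G v)ᶜ) (B v) ∧
      ∀ D, IsComponentOf G ((closedNbr G v)ᶜ) D → fweight w D ≤ fweight w (B v))
    (hC : ∀ v ∈ U, C v = insert v (G.neighborSet v ∩ setNbr G (B v)))
    (hA : ∀ v ∈ U, A v = (B v ∪ C v)ᶜ)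
    (r : V → V → Prop) (hr : ∀ x y, r x y ↔ x = y ∨ y ∈ A x) :
    (∀ x ∈ U, r x x) ∧
      (∀ x ∈ U, ∀ y ∈ U, r x y → r y x → x = y) ∧
      (∀ x ∈ U, ∀ y ∈ U, ∀ z ∈ U, r x y → r y z → r x z) := by
  have hw0 : ∀ v, 0 ≤ w v := fun v => (hw v).1
  have hBw : ∀ v ∈ U, 1 / 2 < fweight w (B v) := by
    intro v hv
    obtain ⟨D, hD, hDw⟩ := hU ▸ hv
    exact hDw.trans_le ((hB v hv).2 D hD)
  have hmemA : ∀ v ∈ U, ∀ u, u ∈ A v ↔ u ≠ v ∧ u ∉ closedNbrSet G (B v) := fun v hv u => by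
    rw [hA v hv, hC v hv, (hB v hv).1.union_insert_inter_setNbr, mem_compl_iff, mem_insert_iff,
      not_or]
  have hBmono : ∀ x ∈ U, ∀ y ∈ U, y ∈ A x → B x ⊆ B y := fun x hx y hy hyA =>
    subset_of_notMem_closedNbrSet hw0 hwt (hB x hx).1.1 (hB x hx).1.2.2.1 (hBw x hx)
      (hB y hy).1 (hBw y hy) ((hmemA x hx y).1 hyA).2
  refine ⟨fun x _ => (hr x x).mpr (Or.inl rfl), ?_, ?_⟩
  · intro x hx y hy hxy hyx
    rcases (hr x y).mp hxy with rfl | hyA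
    · rfl
    rcases (hr y x).mp hyx with rfl | hxA
    · rfl
    have hBxy : B x = B y := (hBmono x hx y hy hyA).antisymm (hBmono y hy x hx hxA)
    exact eq_of_isComponentOf_closedNbr_compl hC4 hdia hcc (hB x hx).1 (hBxy ▸ (hB y hy).1)
  · intro x hx y hy z _ hxy hyz
    rw [hr] at hxy hyz ⊢
    rcases hxy with rfl | hyA
    · exact hyz
    rcases hyz with rfl | hzA
    · exact Or.inr hyA
    refine or_iff_not_imp_left.mpr fun hxz => (hmemA x hx z).2 ⟨Ne.symm hxz, fun hzN => ?_⟩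
    exact ((hmemA y hy z).1 hzA).2 (closedNbrSet_mono (hBmono x hx y hy hyA) hzN)

end Paper
end

section
/- Let x1, x2, x3 be three distinct vertices of a graph G, and let H be a connected induced subgraph of G \ {x1, x2, x3} containing at least one neighbor of each of x1, x2, x3, with V(H) minimal under inclusion subject to these conditions. Then one of the following holds: (i) for some permutation {i, j, k} of {1, 2, 3}, there is a path P from x_i to x_j (or a hole containing the edge x_i x_j) with H = P \ {x_i, x_j}, and x_k either has two non-adjacent neighbors in H or exactly two neighbors in H which are adjacent; (ii) there is a vertex a in H and three paths P1, P2, P3 from a to x1, x2, x3 respectively, with H = (P1 ∪ P2 ∪ P3) \ {x1, x2, x3}, the sets P_i \ {a} pairwise disjoint, and no edges between P_i \ {a} and P_j \ {a} except possibly x_i x_j; (iii) there is a triangle a1 a2 a3 in H and three pairwise disjoint paths P_i from a_i to x_i with H = (P1 ∪ P2 ∪ P3) \ {x1, x2, x3}, and no edges between distinct P_i and P_j except a_i a_j and possibly x_i x_j. -/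
/-!
Let `P` be a shortest path in `H` from `N(x₀)` to `N(x₁)`: it is induced, and only its ends see
`x₀` and `x₁`. Minimality of `H` is always used in the same form: a connected subset of `H` that
meets every `N(xᵢ)` is all of `H`.

If `x₂` has a neighbour on `P`, then `H = V(P)`; either `x₂` has two neighbours there (outcome (i)),
or a single one `t`, and `P` split at `t` is a claw centred at `t` (outcome (ii)).

Otherwise let `L = c c' ⋯ b` be a shortest path in `H` from `V(P)` to `N(x₂)`. Then
`H = V(P) ∪ V(L)`, and `c'` is the only vertex of `L - c` with neighbours on `P`. If `x₀` has a
neighbour on `L - c`, then `x₁` has none, `c` is the end of `P` at `x₀`, and `c` is the only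
neighbour of `c'` on `P`, so `b ⋯ c' c ⋯ a₁` is a path as in outcome (i); the case of `x₁` is the
same with `P` reversed. If neither has, any two neighbours of `c'` on `P` are adjacent, since the
part of `P` strictly between them could be deleted. So `c'` sees either only `c`, and `H` is a claw
centred at `c`, or an edge `fg` of `P`, and `H` is the triangle `fgc'` with three legs
(outcome (iii)).
-/

open SimpleGraph Set

namespace SimpleGraph.Walk

variable {V : Type*} {G : SimpleGraph V} {a b u v : V}

theorem exists_eq_append_append_or (p : G.Walk a b) (hu : u ∈ p.support) (hv : v ∈ p.support) :
    (∃ (T : G.Walk a u) (M : G.Walk u v) (E : G.Walk v b), p = T.append (M.append E)) ∨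
      ∃ (T : G.Walk a v) (M : G.Walk v u) (E : G.Walk u b), p = T.append (M.append E) := by
  obtain ⟨T, D, rfl⟩ := mem_support_iff_exists_append.mp hu
  rcases (mem_support_append_iff T D).mp hv with hvT | hvD
  · obtain ⟨T', M, rfl⟩ := mem_support_iff_exists_append.mp hvT
    exact .inr ⟨T', M, D, (append_assoc T' M D).symm⟩
  · obtain ⟨M, E, rfl⟩ := mem_support_iff_exists_append.mp hvD
    exact .inl ⟨T, M, E, rfl⟩

theorem IsPath.eq_of_mem_support_append {p : G.Walk a u} {q : G.Walk u b}
    (hpq : (p.append q).IsPath) {w : V} (hwp : w ∈ p.support) (hwq : w ∈ q.support) : w = u := by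
  by_contra hw
  exact hpq.ne_of_mem_support_of_append hw hwp hwq rfl

theorem IsPath.append {p : G.Walk a u} {q : G.Walk u b} (hp : p.IsPath) (hq : q.IsPath)
    (hpq : ∀ w ∈ p.support, w ∈ q.support → w = u) : (p.append q).IsPath := by
  rw [isPath_def, support_append, List.nodup_append]
  refine ⟨hp.support_nodup, hq.support_nodup.sublist (List.tail_sublist _), ?_⟩
  rintro w hwp _ hwq rfl
  obtain rfl := hpq w hwp (List.mem_of_mem_tail hwq)
  exact (List.nodup_cons.mp (q.cons_tail_support.symm ▸ hq.support_nodup)).1 hwq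

theorem IsPath.exists_eq_append_cons {T : G.Walk a u} {M : G.Walk u v} {E : G.Walk v b}
    (hp : (T.append (M.append E)).IsPath) (huv : u ≠ v)
    (hM : ∀ w ∈ M.support, w ∈ T.support ∨ w ∈ E.support) :
    ∃ (h : G.Adj u v) (D : G.Walk v b), T.append (M.append E) = T.append (cons h D) := by
  obtain ⟨w, h, M', rfl⟩ := exists_eq_cons_of_ne huv M
  have hME : ((cons h M').append E).IsPath := hp.of_append_right
  rcases hM w (by simp) with hwT | hwE
  · exact absurd (hp.eq_of_mem_support_append hwT (by simp)) h.ne.symm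
  · obtain rfl := hME.eq_of_mem_support_append (by simp) hwE
    exact ⟨h, M'.append E, by rw [cons_append]⟩

theorem IsPath.notMem_of_append_cons {p : G.Walk a u} {h : G.Adj u v} {q : G.Walk v b}
    (hpq : (p.append (cons h q)).IsPath) {w : V} (hw : w ∈ p.support) : w ∉ q.support :=
  fun hwq => by
    obtain rfl := hpq.eq_of_mem_support_append hw (List.mem_cons_of_mem u hwq)
    exact ((cons_isPath_iff h q).mp hpq.of_append_right).2 hwq

theorem IsPath.not_triangle {p : G.Walk a b} (hp : p.IsPath) {x y z : V}
    (hxy : s(x, y) ∈ p.edges) (hyz : s(y, z) ∈ p.edges) (hzx : s(z, x) ∈ p.edges) : False := by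
  induction p with
  | nil => simp at hxy
  | @cons a c b h q ih =>
    have ha : a ∉ q.support := ((cons_isPath_iff h q).mp hp).2
    have split : ∀ {v w : V}, s(v, w) ∈ (cons h q).edges →
        (s(v, w) ∈ q.edges ∧ v ≠ a ∧ w ≠ a ∧ v ≠ w) ∨ (v = a ∧ w = c) ∨ (v = c ∧ w = a) := by
      intro v w he
      rw [edges_cons, List.mem_cons, Sym2.eq_iff] at he
      rcases he with he | he
      · tauto
      · refine .inl ⟨he, fun hv => ha (hv ▸ q.fst_mem_support_of_mem_edges he),
          fun hw => ha (hw ▸ q.snd_mem_support_of_mem_edges he), (q.adj_of_mem_edges he).ne⟩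
    -- The first vertex `a` lies on the first edge only, so it is not a corner of the triangle.
    have hac := h.ne
    rcases split hxy with hxy | hxy <;> rcases split hyz with hyz | hyz <;>
      rcases split hzx with hzx | hzx
    all_goals first
      | exact ih hp.of_cons hxy.1 hyz.1 hzx.1
      | grind

theorem isChordless_nil : (nil : G.Walk a a).IsChordless :=
  isChordless_iff_forall_mem_edges.mpr fun y z hy hz h => by
    simp only [support_nil, List.mem_singleton] at hy hz
    exact absurd (hy.trans hz.symm) h.ne

theorem IsChordless.reverse {p : G.Walk a b} (hp : p.IsChordless) : p.reverse.IsChordless :=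
  isChordless_iff_forall_mem_edges.mpr fun y z hy hz h => by
    simp only [support_reverse, List.mem_reverse, edges_reverse] at hy hz ⊢
    exact hp.mem_edges hy hz h

theorem IsChordless.of_cons {h : G.Adj a u} {q : G.Walk u b} (hc : (cons h q).IsChordless)
    (hp : (cons h q).IsPath) : q.IsChordless :=
  isChordless_iff_forall_mem_edges.mpr fun y z hy hz hyz => by
    have ha : a ∉ q.support := ((cons_isPath_iff h q).mp hp).2
    have := hc.mem_edges (List.mem_cons_of_mem a hy) (List.mem_cons_of_mem a hz) hyz
    rw [edges_cons, List.mem_cons, Sym2.eq_iff] at this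
    rcases this with (⟨rfl, -⟩ | ⟨-, rfl⟩) | he
    exacts [absurd hy ha, absurd hz ha, he]

theorem IsChordless.eq_or_eq_of_append {p : G.Walk a u} {q : G.Walk u b}
    (hc : (p.append q).IsChordless) (hpq : (p.append q).IsPath) {y z : V}
    (hy : y ∈ p.support) (hz : z ∈ q.support) (hyz : G.Adj y z) : y = u ∨ z = u := by
  have := hc.mem_edges (by simp [hy]) (by simp [hz]) hyz
  rcases List.mem_append.mp (edges_append p q ▸ this) with he | he
  · exact .inr (hpq.eq_of_mem_support_append (p.snd_mem_support_of_mem_edges he) hz)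
  · exact .inl (hpq.eq_of_mem_support_append hy (q.fst_mem_support_of_mem_edges he))

theorem IsChordless.eq_and_eq_of_append_cons {p : G.Walk a u} {h : G.Adj u v} {q : G.Walk v b}
    (hc : (p.append (cons h q)).IsChordless) (hpq : (p.append (cons h q)).IsPath) {y z : V}
    (hy : y ∈ p.support) (hz : z ∈ q.support) (hyz : G.Adj y z) : y = u ∧ z = v := by
  have hyu : y = u := (hc.eq_or_eq_of_append hpq hy (List.mem_cons_of_mem u hz) hyz).resolve_right
    fun hzu => hpq.notMem_of_append_cons p.end_mem_support (hzu ▸ hz)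
  rw [← concat_append] at hc hpq
  exact ⟨hyu, (hc.eq_or_eq_of_append hpq (by simp [hy]) hz hyz).resolve_left
    fun hyv => h.ne (hyu.symm.trans hyv)⟩

theorem IsChordless.mem_edges_append_cons {p : G.Walk a u} {q : G.Walk v b} (h : G.Adj u v)
    (hp : p.IsChordless) (hq : q.IsChordless) {y z : V}
    (hy : y ∈ (p.append (cons h q)).support) (hz : z ∈ (p.append (cons h q)).support)
    (hyz : G.Adj y z) :
    s(y, z) ∈ (p.append (cons h q)).edges ∨ (y ∈ p.support ∧ z ∈ q.support) ∨
      (z ∈ p.support ∧ y ∈ q.support) := by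
  simp only [mem_support_append_iff, support_cons, List.mem_cons] at hy hz
  have hu : u ∈ p.support := p.end_mem_support
  have hv : v ∈ q.support := q.start_mem_support
  rw [edges_append, edges_cons, List.mem_append, List.mem_cons]
  rcases hy with hy | rfl | hy <;> rcases hz with hz | rfl | hz
  all_goals first
    | exact .inl (.inl (hp.mem_edges ‹_› ‹_› hyz))
    | exact .inl (.inr (.inr (hq.mem_edges ‹_› ‹_› hyz)))
    | exact .inr (.inl ⟨‹_›, ‹_›⟩)
    | exact .inr (.inr ⟨‹_›, ‹_›⟩)

theorem IsChordless.append_cons {p : G.Walk a u} {q : G.Walk v b} (h : G.Adj u v)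
    (hp : p.IsChordless) (hq : q.IsChordless)
    (hpq : ∀ y ∈ p.support, ∀ z ∈ q.support, G.Adj y z → y = u ∧ z = v) :
    (p.append (cons h q)).IsChordless :=
  isChordless_iff_forall_mem_edges.mpr fun y z hy hz hyz => by
    rcases hp.mem_edges_append_cons h hq hy hz hyz with he | ⟨hy, hz⟩ | ⟨hz, hy⟩
    · exact he
    · obtain ⟨rfl, rfl⟩ := hpq y hy z hz hyz
      simp
    · obtain ⟨rfl, rfl⟩ := hpq z hz y hy hyz.symm
      simp [Sym2.eq_swap]

theorem IsChordless.mem_edges_cons_concat {w : G.Walk u v} (hwc : w.IsChordless)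
    (ha : G.Adj a u) (hb : G.Adj v b) (haw : ∀ z ∈ w.support, G.Adj a z → z = u)
    (hbw : ∀ z ∈ w.support, G.Adj z b → z = v) {y z : V}
    (hy : y ∈ ((cons ha w).concat hb).support) (hz : z ∈ ((cons ha w).concat hb).support)
    (hyz : G.Adj y z) : s(y, z) ∈ ((cons ha w).concat hb).edges ∨ s(y, z) = s(a, b) := by
  have hc : (cons ha w).IsChordless := by
    simpa using isChordless_nil.append_cons ha hwc fun a' ha' t ht hat => by
      rw [support_nil, List.mem_singleton] at ha'
      subst ha'
      exact ⟨rfl, haw t ht hat⟩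
  rw [concat_eq_append] at hy hz ⊢
  have cross : ∀ y ∈ (cons ha w).support, G.Adj y b →
      s(y, b) ∈ ((cons ha w).append (cons hb nil)).edges ∨ s(y, b) = s(a, b) := by
    intro y hy hyb
    rcases List.mem_cons.mp hy with rfl | hy
    · exact .inr rfl
    · obtain rfl := hbw y hy hyb
      simp [edges_append]
  rcases hc.mem_edges_append_cons hb isChordless_nil hy hz hyz with he | ⟨hy', hz'⟩ | ⟨hz', hy'⟩
  · exact .inl he
  · rw [support_nil, List.mem_singleton] at hz'
    subst hz'
    exact cross y hy' hyz
  · rw [support_nil, List.mem_singleton] at hy'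
    subst hy'
    rw [Sym2.eq_swap]
    exact cross z hz' hyz.symm

theorem IsChordless.exists_not_adj_or_eq_pair {w : G.Walk a b} (hwc : w.IsChordless)
    (hw : w.IsPath) {N : Set V} (hN : ∀ t ∈ N, t ∈ w.support) {y z : V} (hy : y ∈ N) (hz : z ∈ N)
    (hyz : y ≠ z) : (∃ y ∈ N, ∃ z ∈ N, y ≠ z ∧ ¬ G.Adj y z) ∨ (G.Adj y z ∧ N = {y, z}) := by
  refine or_iff_not_imp_left.mpr fun h => ?_
  push Not at h
  have hadj : G.Adj y z := h y hy z hz hyz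
  refine ⟨hadj, subset_antisymm (fun t ht => ?_) (by simp [Set.insert_subset_iff, hy, hz])⟩
  by_contra ht'
  simp only [Set.mem_insert_iff, Set.mem_singleton_iff, not_or] at ht'
  exact hw.not_triangle (hwc.mem_edges (hN y hy) (hN z hz) hadj)
    (hwc.mem_edges (hN z hz) (hN t ht) (h z hz t ht (Ne.symm ht'.2)))
    (hwc.mem_edges (hN t ht) (hN y hy) (h t ht y hy ht'.1))

end SimpleGraph.Walk

namespace Paper

open Walk

variable {V : Type} {G : SimpleGraph V} {a b c c' u v a₀ a₁ : V} {x : Fin 3 → V}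
  {H : Set V} {i j k : Fin 3}

@[simp] theorem mem_suppSet {p : G.Walk a b} : v ∈ suppSet G p ↔ v ∈ p.support := Iff.rfl

@[simp] theorem suppSet_append (p : G.Walk a u) (q : G.Walk u b) :
    suppSet G (p.append q) = suppSet G p ∪ suppSet G q := by
  ext; simp [mem_support_append_iff]

@[simp] theorem suppSet_cons (h : G.Adj a u) (p : G.Walk u b) :
    suppSet G (cons h p) = insert a (suppSet G p) := by
  ext; simp

@[simp] theorem suppSet_nil : suppSet G (nil : G.Walk a a) = {a} := by
  ext; simp

@[simp] theorem suppSet_reverse (p : G.Walk a b) : suppSet G p.reverse = suppSet G p := by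
  ext; simp

@[simp] theorem suppSet_concat (p : G.Walk a u) (h : G.Adj u b) :
    suppSet G (p.concat h) = insert b (suppSet G p) := by
  ext; simp [support_concat, or_comm]

theorem connected_induce_suppSet (p : G.Walk a b) : (G.induce (suppSet G p)).Connected :=
  p.connected_induce_support

/-- `p` is a shortest walk from `A` to `B` among the walks with all their vertices in `S`. -/
structure IsShortestWalkIn (G : SimpleGraph V) (S A B : Set V) {a b : V} (p : G.Walk a b) :
    Prop where
  start_mem : a ∈ A
  end_mem : b ∈ B
  subset : suppSet G p ⊆ S
  length_le : ∀ ⦃a' b' : V⦄ (q : G.Walk a' b'), a' ∈ A → b' ∈ B → suppSet G q ⊆ S →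
    p.length ≤ q.length

theorem exists_isShortestWalkIn {S A B : Set V} (hS : (G.induce S).Connected)
    (hA : (A ∩ S).Nonempty) (hB : (B ∩ S).Nonempty) :
    ∃ (a b : V) (p : G.Walk a b), IsShortestWalkIn G S A B p := by
  classical
  obtain ⟨a, haA, haS⟩ := hA
  obtain ⟨b, hbB, hbS⟩ := hB
  have hex : ∃ n, ∃ (a b : V) (p : G.Walk a b),
      a ∈ A ∧ b ∈ B ∧ suppSet G p ⊆ S ∧ p.length = n := by
    obtain ⟨p⟩ := hS.preconnected ⟨a, haS⟩ ⟨b, hbS⟩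
    refine ⟨_, a, b, p.map (Embedding.induce S).toHom, haA, hbB, ?_, rfl⟩
    intro v hv
    have hv' : v ∈ (p.map (Embedding.induce S).toHom).support := hv
    rw [Walk.support_map, List.mem_map] at hv'
    obtain ⟨w, -, rfl⟩ := hv'
    exact w.2
  obtain ⟨a, b, p, ha, hb, hp, hlen⟩ := Nat.find_spec hex
  exact ⟨a, b, p, ha, hb, hp, fun a' b' q ha' hb' hq =>
    hlen ▸ Nat.find_min' hex ⟨a', b', q, ha', hb', hq, rfl⟩⟩

namespace IsShortestWalkIn

variable {S A B : Set V} {p : G.Walk a b}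

theorem reverse (hp : IsShortestWalkIn G S A B p) : IsShortestWalkIn G S B A p.reverse :=
  ⟨hp.end_mem, hp.start_mem, by simpa using hp.subset, fun a' b' q ha' hb' hq => by
    simpa using hp.length_le q.reverse hb' ha' (by simpa using hq)⟩

theorem isPath (hp : IsShortestWalkIn G S A B p) : p.IsPath := by
  classical
  rw [← bypass_eq_self_of_length_le_length_bypass p
    (hp.length_le _ hp.start_mem hp.end_mem fun v hv =>
      hp.subset (p.support_bypass_subset_support hv))]
  exact p.bypass_isPath

theorem isChordless (hp : IsShortestWalkIn G S A B p) : p.IsChordless := by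
  have key : ∀ {u v : V} (T : G.Walk a u) (M : G.Walk u v) (E : G.Walk v b),
      p = T.append (M.append E) → G.Adj u v → s(u, v) ∈ p.edges := by
    intro u v T M E hTME huv
    subst hTME
    have := hp.length_le (T.append (cons huv E)) hp.start_mem hp.end_mem fun w hw => by
      simp only [mem_suppSet, mem_support_append_iff, support_cons, List.mem_cons] at hw
      exact hp.subset (by rcases hw with hw | rfl | hw <;> simp [*])
    simp only [length_append, length_cons] at this
    have hM : M = huv.toWalk := eq_of_length_le_one (by omega) (by simp)
    simp [hM, edges_append]
  refine isChordless_iff_forall_mem_edges.mpr fun u v hu hv huv => ?_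
  rcases exists_eq_append_append_or p hu hv with ⟨T, M, E, hTME⟩ | ⟨T, M, E, hTME⟩
  · exact key T M E hTME huv
  · exact Sym2.eq_swap ▸ key T M E hTME huv.symm

theorem eq_start_of_mem (hp : IsShortestWalkIn G S A B p) (hv : v ∈ p.support) (hvA : v ∈ A) :
    v = a := by
  obtain ⟨T, D, rfl⟩ := mem_support_iff_exists_append.mp hv
  have := hp.length_le D hvA hp.end_mem (subset_union_right.trans (by simpa using hp.subset))
  rw [length_append] at this
  exact (eq_of_length_eq_zero (p := T) (by omega)).symm

theorem eq_end_of_mem (hp : IsShortestWalkIn G S A B p) (hv : v ∈ p.support) (hvB : v ∈ B) :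
    v = b :=
  hp.reverse.eq_start_of_mem (by simpa using hv) hvB

theorem eq_of_adj_of_mem_tail {h : G.Adj a c} {W : G.Walk c b}
    (hp : IsShortestWalkIn G S A B (cons h W)) {z : V} (hzA : z ∈ A) (hzS : z ∈ S)
    (hv : v ∈ W.support) (hzv : G.Adj z v) : v = c := by
  obtain ⟨T, D, rfl⟩ := mem_support_iff_exists_append.mp hv
  have hD : suppSet G D ⊆ S := fun w hw => hp.subset (by simp [hw])
  have := hp.length_le (cons hzv D) hzA hp.end_mem (by simp [insert_subset_iff, hzS, hD])
  simp only [length_cons, length_append] at this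
  exact (eq_of_length_eq_zero (p := T) (by omega)).symm

theorem notMem_of_mem_tail {h : G.Adj a c} {W : G.Walk c b}
    (hp : IsShortestWalkIn G S A B (cons h W)) (hv : v ∈ W.support) : v ∉ A := fun hvA => by
  obtain rfl := hp.eq_start_of_mem (List.mem_cons_of_mem a hv) hvA
  exact ((cons_isPath_iff h W).mp hp.isPath).2 hv

theorem notMem_of_cons {h : G.Adj a c} {W : G.Walk c b}
    (hp : IsShortestWalkIn G S A B (cons h W)) (hvA : v ∈ A) (hvS : v ∈ S) : v ∉ B := fun hvB => by
  have := hp.length_le (nil : G.Walk v v) hvA hvB (by simpa using hvS)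
  simp at this

theorem inter_subset_end_of_notMem_tail {d : V} {h : G.Adj c c'} {W : G.Walk c' d}
    (hp : IsShortestWalkIn G S A B p) (hcover : suppSet G p ∪ suppSet G (cons h W) = H)
    (hc : c ∈ p.support) (hWB : ∀ v ∈ W.support, v ∉ B) : B ∩ H ⊆ {b} := by
  rintro v ⟨hvB, hv⟩
  rw [← hcover, suppSet_cons] at hv
  rcases hv with hv | rfl | hv
  exacts [hp.eq_end_of_mem hv hvB, hp.eq_end_of_mem hc hvB, absurd hvB (hWB v hv)]

theorem inter_subset_end_of_union_eq {P : G.Walk a₀ a₁} {h : G.Adj a c} {W : G.Walk c b}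
    (hp : IsShortestWalkIn G S (suppSet G P) B (cons h W))
    (hcover : suppSet G P ∪ suppSet G (cons h W) = H) (hPS : suppSet G P ⊆ S) :
    B ∩ H ⊆ {b} := by
  rintro v ⟨hvB, hv⟩
  rw [← hcover] at hv
  rcases hv with hv | hv
  exacts [absurd hvB (hp.notMem_of_cons hv (hPS hv)), hp.eq_end_of_mem hv hvB]

end IsShortestWalkIn

def Attaches (G : SimpleGraph V) (x : Fin 3 → V) (X : Set V) : Prop :=
  ∀ i, ∃ h ∈ X, G.Adj (x i) h

structure IsMinimalConnector (G : SimpleGraph V) (x : Fin 3 → V) (H : Set V) : Prop where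
  injective : Function.Injective x
  notMem : ∀ i, x i ∉ H
  connected : (G.induce H).Connected
  attaches : Attaches G x H
  minimal : ∀ H' ⊆ H, (G.induce H').Connected → Attaches G x H' → H' = H

-- The outcomes (i), (ii) and (iii) of the theorem.
def IsPathConnector (G : SimpleGraph V) (x : Fin 3 → V) (H : Set V) : Prop :=
  ∃ i j k : Fin 3, i ≠ j ∧ i ≠ k ∧ j ≠ k ∧
    ∃ p : G.Walk (x i) (x j), p.IsPath ∧
      (InducedWalk G p ∨ (G.Adj (x i) (x j) ∧ ∀ u v : V, u ∈ p.support →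
        v ∈ p.support → G.Adj u v → s(u, v) ∈ p.edges ∨ s(u, v) = s(x i, x j))) ∧
      H = suppSet G p \ {x i, x j} ∧
      ((∃ a b : V, a ∈ H ∧ b ∈ H ∧ G.Adj (x k) a ∧ G.Adj (x k) b ∧ a ≠ b ∧ ¬ G.Adj a b) ∨
        (∃ a b : V, a ≠ b ∧ G.Adj a b ∧ G.neighborSet (x k) ∩ H = {a, b}))

def IsClawConnector (G : SimpleGraph V) (x : Fin 3 → V) (H : Set V) : Prop :=
  ∃ a : V, a ∈ H ∧ ∃ p : (i : Fin 3) → G.Walk a (x i),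
    (∀ i, (p i).IsPath) ∧
    H = (⋃ i, suppSet G (p i)) \ {x 0, x 1, x 2} ∧
    (∀ i j, i ≠ j → Disjoint (suppSet G (p i) \ {a}) (suppSet G (p j) \ {a})) ∧
    (∀ i j, i ≠ j → ∀ u v : V, u ∈ suppSet G (p i) \ {a} →
      v ∈ suppSet G (p j) \ {a} → G.Adj u v → s(u, v) = s(x i, x j))

def IsTriangleConnector (G : SimpleGraph V) (x : Fin 3 → V) (H : Set V) : Prop :=
  ∃ a : Fin 3 → V, (∀ i, a i ∈ H) ∧ (∀ i j, i ≠ j → G.Adj (a i) (a j)) ∧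
    ∃ p : (i : Fin 3) → G.Walk (a i) (x i),
      (∀ i, (p i).IsPath) ∧
      H = (⋃ i, suppSet G (p i)) \ {x 0, x 1, x 2} ∧
      (∀ i j, i ≠ j → Disjoint (suppSet G (p i)) (suppSet G (p j))) ∧
      (∀ i j, i ≠ j → ∀ u v : V, u ∈ suppSet G (p i) → v ∈ suppSet G (p j) →
        G.Adj u v → s(u, v) = s(a i, a j) ∨ s(u, v) = s(x i, x j))

theorem apply_mem_triple (x : Fin 3 → V) (i : Fin 3) : x i ∈ ({x 0, x 1, x 2} : Set V) := by
  fin_cases i <;> simp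

theorem pairwise_fin_three {R : Fin 3 → Fin 3 → Prop} (hR : ∀ i j, R i j → R j i)
    (h₀₁ : R 0 1) (h₀₂ : R 0 2) (h₁₂ : R 1 2) : Pairwise R := by
  intro i j hij
  fin_cases i <;> fin_cases j <;> first | exact absurd rfl hij | assumption | exact hR _ _ ‹_›

theorem eq_iUnion_sdiff_of_legs (hxH : ∀ l, x l ∉ H)
    {S T : Fin 3 → Set V} (hT : ∀ i, T i = insert (x i) (S i))
    (hSH : ∀ i, S i ⊆ H) (hHS : ∀ v ∈ H, ∃ i, v ∈ S i) :
    H = (⋃ i, T i) \ {x 0, x 1, x 2} := by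
  ext v
  simp only [hT, mem_sdiff, mem_iUnion, mem_insert_iff]
  constructor
  · intro hv
    obtain ⟨i, hi⟩ := hHS v hv
    exact ⟨⟨i, .inr hi⟩, fun hx => by
      obtain rfl | rfl | rfl := hx <;> exact hxH _ hv⟩
  · rintro ⟨⟨i, rfl | hi⟩, hv⟩
    exacts [absurd (apply_mem_triple x i) hv, hSH i hi]

theorem isClawConnector_of_legs (hx : Function.Injective x) (hxH : ∀ l, x l ∉ H) (haH : a ∈ H)
    (S : Fin 3 → Set V)
    (hleg : ∀ i, ∃ (t : V) (Q : G.Walk a t), Q.IsPath ∧ suppSet G Q = S i ∧ G.Adj t (x i))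
    (hSH : ∀ i, S i ⊆ H) (hHS : ∀ v ∈ H, ∃ i, v ∈ S i)
    (hdisj : Pairwise fun i j => S i ∩ S j ⊆ {a})
    (hanti : Pairwise fun i j => ∀ y ∈ S i, ∀ z ∈ S j, G.Adj y z → y = a ∨ z = a)
    (hN : ∀ i, G.neighborSet (x i) ∩ H ⊆ S i) : IsClawConnector G x H := by
  choose t Q hQ hQS htx using hleg
  have hpS : ∀ i, suppSet G ((Q i).concat (htx i)) = insert (x i) (S i) := by simp [hQS]
  refine ⟨a, haH, fun i => (Q i).concat (htx i),
    fun i => (hQ i).concat (fun h => hxH i (hSH i (hQS i ▸ h))) _,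
    eq_iUnion_sdiff_of_legs hxH hpS hSH hHS, fun i j hij => ?_, fun i j hij y z hy hz hyz => ?_⟩
  · rw [Set.disjoint_left]
    rintro v ⟨hvi, hva⟩ ⟨hvj, -⟩
    rw [hpS] at hvi hvj
    rcases hvi with rfl | hvi <;> rcases hvj with hvj | hvj
    · exact hij (hx hvj)
    · exact hxH i (hSH j hvj)
    · exact hxH j (hvj ▸ hSH i hvi)
    · exact hva (hdisj hij ⟨hvi, hvj⟩)
  · obtain ⟨hy, hya⟩ := hy
    obtain ⟨hz, hza⟩ := hz
    rw [hpS] at hy hz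
    rcases hy with rfl | hy <;> rcases hz with rfl | hz
    · rfl
    · exact absurd (hdisj hij ⟨hN i ⟨hyz, hSH j hz⟩, hz⟩) hza
    · exact absurd (hdisj hij ⟨hy, hN j ⟨hyz.symm, hSH i hy⟩⟩) hya
    · exact ((hanti hij y hy z hz hyz).elim hya hza).elim

theorem isTriangleConnector_of_legs (hx : Function.Injective x) (hxH : ∀ l, x l ∉ H)
    (a : Fin 3 → V) (haH : ∀ i, a i ∈ H) (ha : Pairwise fun i j => G.Adj (a i) (a j))
    (S : Fin 3 → Set V)
    (hleg : ∀ i, ∃ (t : V) (Q : G.Walk (a i) t), Q.IsPath ∧ suppSet G Q = S i ∧ G.Adj t (x i))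
    (hSH : ∀ i, S i ⊆ H) (hHS : ∀ v ∈ H, ∃ i, v ∈ S i)
    (hdisj : Pairwise fun i j => Disjoint (S i) (S j))
    (hanti : Pairwise fun i j => ∀ y ∈ S i, ∀ z ∈ S j, G.Adj y z → y = a i ∧ z = a j)
    (hN : ∀ i, G.neighborSet (x i) ∩ H ⊆ S i) : IsTriangleConnector G x H := by
  choose t Q hQ hQS htx using hleg
  have hpS : ∀ i, suppSet G ((Q i).concat (htx i)) = insert (x i) (S i) := by simp [hQS]
  refine ⟨a, haH, ha, fun i => (Q i).concat (htx i),
    fun i => (hQ i).concat (fun h => hxH i (hSH i (hQS i ▸ h))) _,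
    eq_iUnion_sdiff_of_legs hxH hpS hSH hHS, fun i j hij => ?_, fun i j hij y z hy hz hyz => ?_⟩
  · rw [Set.disjoint_left]
    intro v hvi hvj
    rw [hpS] at hvi hvj
    rcases hvi with rfl | hvi <;> rcases hvj with hvj | hvj
    · exact hij (hx hvj)
    · exact hxH i (hSH j hvj)
    · exact hxH j (hvj ▸ hSH i hvi)
    · exact Set.disjoint_left.mp (hdisj hij) hvi hvj
  · rw [hpS] at hy hz
    rcases hy with rfl | hy <;> rcases hz with rfl | hz
    · exact .inr rfl
    · exact absurd hz (Set.disjoint_left.mp (hdisj hij) (hN i ⟨hyz, hSH j hz⟩))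
    · exact absurd hy (Set.disjoint_right.mp (hdisj hij) (hN j ⟨hyz.symm, hSH i hy⟩))
    · obtain ⟨rfl, rfl⟩ := hanti hij y hy z hz hyz
      exact .inl rfl

theorem isPathConnector_of_path (hx : Function.Injective x) (hxH : ∀ l, x l ∉ H) (hij : i ≠ j)
    (hik : i ≠ k) (hjk : j ≠ k) {w : G.Walk u v} (hw : w.IsPath) (hwc : w.IsChordless)
    (hwH : suppSet G w = H) (hu : G.Adj (x i) u) (hv : G.Adj (x j) v)
    (hNi : G.neighborSet (x i) ∩ H ⊆ {u}) (hNj : G.neighborSet (x j) ∩ H ⊆ {v})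
    {y z : V} (hy : y ∈ H) (hz : z ∈ H) (hyz : y ≠ z) (hky : G.Adj (x k) y)
    (hkz : G.Adj (x k) z) : IsPathConnector G x H := by
  subst hwH
  have hxw : ∀ l, x l ∉ w.support := hxH
  have hp : ((cons hu w).concat hv.symm).IsPath := by
    refine (hw.cons (hxw i)).concat ?_ hv.symm
    simpa [not_or] using ⟨fun h => hij (hx h.symm), hxw j⟩
  have hchord : ∀ y z, y ∈ ((cons hu w).concat hv.symm).support →
      z ∈ ((cons hu w).concat hv.symm).support → G.Adj y z →
      s(y, z) ∈ ((cons hu w).concat hv.symm).edges ∨ s(y, z) = s(x i, x j) := fun _ _ =>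
    hwc.mem_edges_cons_concat hu hv.symm (fun t ht hit => hNi ⟨hit, ht⟩)
      fun t ht htj => hNj ⟨htj.symm, ht⟩
  refine ⟨i, j, k, hij, hik, hjk, _, hp, ?_, ?_, ?_⟩
  · by_cases hadj : G.Adj (x i) (x j)
    · exact .inr ⟨hadj, hchord⟩
    · refine .inl fun y z hy hz hyz => (hchord y z hy hz hyz).resolve_right fun he => hadj ?_
      rcases Sym2.eq_iff.mp he with ⟨rfl, rfl⟩ | ⟨rfl, rfl⟩
      exacts [hyz, hyz.symm]
  · ext t
    simp only [suppSet_concat, suppSet_cons, mem_sdiff, mem_insert_iff, mem_singleton_iff,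
      mem_suppSet, not_or]
    constructor
    · intro ht
      exact ⟨.inr (.inr ht), fun h => hxw i (h ▸ ht), fun h => hxw j (h ▸ ht)⟩
    · rintro ⟨rfl | rfl | ht, hti, htj⟩ <;> simp_all
  · rcases hwc.exists_not_adj_or_eq_pair hw (N := G.neighborSet (x k) ∩ suppSet G w)
      (fun t ht => ht.2) ⟨hky, hy⟩ ⟨hkz, hz⟩ hyz with ⟨y', hy', z', hz', hne, hna⟩ | ⟨hadj, hN⟩
    · exact .inl ⟨y', z', hy'.2, hz'.2, hy'.1, hz'.1, hne, hna⟩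
    · exact .inr ⟨y, z, hyz, hadj, hN⟩

theorem isClawConnector_of_append (hx : Function.Injective x) (hxH : ∀ l, x l ∉ H)
    {P : G.Walk a₀ a₁} {T : G.Walk a₀ c} {D : G.Walk c a₁} (hTD : P = T.append D)
    {L : G.Walk c b} (hP : P.IsPath) (hPc : P.IsChordless) (hL : L.IsPath)
    (hLP : ∀ v ∈ L.support, v ∈ P.support → v = c)
    (hanti : ∀ u ∈ L.support, ∀ v ∈ P.support, G.Adj u v → u = c ∨ v = c)
    (hcover : suppSet G P ∪ suppSet G L = H)
    (h₀ : G.Adj (x 0) a₀) (h₁ : G.Adj (x 1) a₁) (h₂ : G.Adj (x 2) b)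
    (hN₀ : G.neighborSet (x 0) ∩ H ⊆ {a₀}) (hN₁ : G.neighborSet (x 1) ∩ H ⊆ {a₁})
    (hN₂ : G.neighborSet (x 2) ∩ H ⊆ suppSet G L) : IsClawConnector G x H := by
  subst hTD hcover
  have hTP : ∀ v ∈ T.support, v ∈ (T.append D).support := fun v hv => by simp [hv]
  have hDP : ∀ v ∈ D.support, v ∈ (T.append D).support := fun v hv => by simp [hv]
  refine isClawConnector_of_legs (a := c) hx hxH (.inr L.start_mem_support)
    ![suppSet G T, suppSet G D, suppSet G L] (fun i => ?_) (fun i => ?_) (fun v hv => ?_) ?_ ?_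
    (fun i => ?_)
  · fin_cases i
    exacts [⟨_, T.reverse, hP.of_append_left.reverse, suppSet_reverse T, h₀.symm⟩,
      ⟨_, D, hP.of_append_right, rfl, h₁.symm⟩, ⟨_, L, hL, rfl, h₂.symm⟩]
  · fin_cases i <;> intro v hv
    exacts [.inl (hTP v hv), .inl (hDP v hv), .inr hv]
  · simp only [suppSet_append, mem_union] at hv
    rcases hv with (hv | hv) | hv
    exacts [⟨0, hv⟩, ⟨1, hv⟩, ⟨2, hv⟩]
  · refine pairwise_fin_three (fun i j h => by rwa [inter_comm]) ?_ ?_ ?_ <;>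
      rintro v ⟨hvi, hvj⟩
    exacts [hP.eq_of_mem_support_append hvi hvj, hLP v hvj (hTP v hvi), hLP v hvj (hDP v hvi)]
  · refine pairwise_fin_three (fun i j h z hz y hy hzy => (h y hy z hz hzy.symm).symm)
      ?_ ?_ ?_ <;> intro y hy z hz hyz
    exacts [hPc.eq_or_eq_of_append hP hy hz hyz, (hanti z hz y (hTP y hy) hyz.symm).symm,
      (hanti z hz y (hDP y hy) hyz.symm).symm]
  · fin_cases i <;> intro v hv
    · obtain rfl := hN₀ hv
      exact T.start_mem_support
    · obtain rfl := hN₁ hv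
      exact D.end_mem_support
    · exact hN₂ hv

theorem isTriangleConnector_of_append_cons (hx : Function.Injective x) (hxH : ∀ l, x l ∉ H)
    {f g : V} {P : G.Walk a₀ a₁} {T : G.Walk a₀ f} {hfg : G.Adj f g}
    {D : G.Walk g a₁} (hTD : P = T.append (cons hfg D)) {W : G.Walk c' b}
    (hP : P.IsPath) (hPc : P.IsChordless) (hW : W.IsPath) (hf : G.Adj f c') (hg : G.Adj g c')
    (hWP : ∀ v ∈ W.support, v ∉ P.support)
    (hanti : ∀ v ∈ W.support, ∀ z ∈ P.support, G.Adj v z → v = c' ∧ (z = f ∨ z = g))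
    (hcover : suppSet G P ∪ suppSet G W = H)
    (h₀ : G.Adj (x 0) a₀) (h₁ : G.Adj (x 1) a₁) (h₂ : G.Adj (x 2) b)
    (hN₀ : G.neighborSet (x 0) ∩ H ⊆ {a₀}) (hN₁ : G.neighborSet (x 1) ∩ H ⊆ {a₁})
    (hN₂ : G.neighborSet (x 2) ∩ H ⊆ suppSet G W) : IsTriangleConnector G x H := by
  subst hTD hcover
  have hTP : ∀ v ∈ T.support, v ∈ (T.append (cons hfg D)).support := fun v hv => by simp [hv]
  have hDP : ∀ v ∈ D.support, v ∈ (T.append (cons hfg D)).support := fun v hv => by simp [hv]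
  have hTD : ∀ v ∈ T.support, v ∉ D.support := fun v hv => hP.notMem_of_append_cons hv
  refine isTriangleConnector_of_legs hx hxH ![f, g, c'] (fun i => ?_)
    (pairwise_fin_three (fun i j h => h.symm) hfg hf hg) ![suppSet G T, suppSet G D, suppSet G W]
    (fun i => ?_) (fun i => ?_) (fun v hv => ?_) ?_ ?_ (fun i => ?_)
  · fin_cases i
    exacts [.inl (hTP f T.end_mem_support), .inl (hDP g D.start_mem_support),
      .inr W.start_mem_support]
  · fin_cases i
    exacts [⟨_, T.reverse, hP.of_append_left.reverse, suppSet_reverse T, h₀.symm⟩,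
      ⟨_, D, hP.of_append_right.of_cons, rfl, h₁.symm⟩, ⟨_, W, hW, rfl, h₂.symm⟩]
  · fin_cases i <;> intro v hv
    exacts [.inl (hTP v hv), .inl (hDP v hv), .inr hv]
  · simp only [suppSet_append, suppSet_cons, mem_union, mem_insert_iff] at hv
    rcases hv with (hv | rfl | hv) | hv
    exacts [⟨0, hv⟩, ⟨0, T.end_mem_support⟩, ⟨1, hv⟩, ⟨2, hv⟩]
  · refine pairwise_fin_three (fun i j h => h.symm) ?_ ?_ ?_ <;>
      refine Set.disjoint_left.mpr fun v hvi hvj => ?_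
    exacts [hTD v hvi hvj, hWP v hvj (hTP v hvi), hWP v hvj (hDP v hvi)]
  · refine pairwise_fin_three (fun i j h z hz y hy hzy => (h y hy z hz hzy.symm).symm)
      ?_ ?_ ?_ <;> intro y hy z hz hyz
    · exact hPc.eq_and_eq_of_append_cons hP hy hz hyz
    · obtain ⟨rfl, hz'⟩ := hanti z hz y (hTP y hy) hyz.symm
      exact ⟨hz'.resolve_right fun h => hTD g (h ▸ hy) D.start_mem_support, rfl⟩
    · obtain ⟨rfl, hz'⟩ := hanti z hz y (hDP y hy) hyz.symm
      exact ⟨hz'.resolve_left fun h => hTD f T.end_mem_support (h ▸ hy), rfl⟩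
  · fin_cases i <;> intro v hv
    · obtain rfl := hN₀ hv
      exact T.start_mem_support
    · obtain rfl := hN₁ hv
      exact D.end_mem_support
    · exact hN₂ hv

theorem attaches_of_ne (hij : i ≠ j) (hik : i ≠ k) (hjk : j ≠ k) {X : Set V}
    (hi : ∃ h ∈ X, G.Adj (x i) h) (hj : ∃ h ∈ X, G.Adj (x j) h) (hk : ∃ h ∈ X, G.Adj (x k) h) :
    Attaches G x X := by
  intro l
  obtain rfl | rfl | rfl : l = i ∨ l = j ∨ l = k := by omega
  exacts [hi, hj, hk]

namespace IsMinimalConnector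

theorem subset_of_connected (hH : IsMinimalConnector G x H) {X : Set V} (hXH : X ⊆ H)
    (hX : (G.induce X).Connected) (hatt : Attaches G x X) : H ⊆ X :=
  (hH.minimal X hXH hX hatt).ge

theorem exists_isShortestWalkIn (hH : IsMinimalConnector G x H) (i j : Fin 3) :
    ∃ (a b : V) (P : G.Walk a b),
      IsShortestWalkIn G H (G.neighborSet (x i)) (G.neighborSet (x j)) P := by
  obtain ⟨u, hu, hiu⟩ := hH.attaches i
  obtain ⟨v, hv, hjv⟩ := hH.attaches j
  exact Paper.exists_isShortestWalkIn hH.connected ⟨u, hiu, hu⟩ ⟨v, hjv, hv⟩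

theorem isPathConnector_or_isClawConnector_of_adj_mem_support (hH : IsMinimalConnector G x H)
    {P : G.Walk a₀ a₁}
    (hP : IsShortestWalkIn G H (G.neighborSet (x 0)) (G.neighborSet (x 1)) P) {t : V}
    (ht : t ∈ P.support) (h2t : G.Adj (x 2) t) :
    IsPathConnector G x H ∨ IsClawConnector G x H := by
  have hPH : suppSet G P = H := subset_antisymm hP.subset <|
    hH.subset_of_connected hP.subset (connected_induce_suppSet P) <|
      attaches_of_ne (i := 0) (j := 1) (k := 2) (by decide) (by decide) (by decide)
        ⟨a₀, P.start_mem_support, hP.start_mem⟩ ⟨a₁, P.end_mem_support, hP.end_mem⟩ ⟨t, ht, h2t⟩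
  have hN₀ : G.neighborSet (x 0) ∩ H ⊆ {a₀} := fun v hv =>
    hP.eq_start_of_mem (hPH.ge hv.2) hv.1
  have hN₁ : G.neighborSet (x 1) ∩ H ⊆ {a₁} := fun v hv =>
    hP.eq_end_of_mem (hPH.ge hv.2) hv.1
  by_cases h2 : ∃ u ∈ H, G.Adj (x 2) u ∧ u ≠ t
  · obtain ⟨u, hu, h2u, hut⟩ := h2
    exact .inl <| isPathConnector_of_path hH.injective hH.notMem (i := 0) (j := 1) (k := 2)
      (by decide) (by decide) (by decide) hP.isPath hP.isChordless hPH hP.start_mem hP.end_mem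
      hN₀ hN₁ hu (hP.subset ht) hut h2u h2t
  · push Not at h2
    obtain ⟨T, D, hTD⟩ := mem_support_iff_exists_append.mp ht
    refine .inr <| isClawConnector_of_append hH.injective hH.notMem hTD (L := nil) hP.isPath
      hP.isChordless .nil (fun v hv _ => by simpa using hv)
      (fun u hu v _ _ => .inl (by simpa using hu)) ?_ hP.start_mem hP.end_mem h2t hN₀ hN₁
      fun v hv => by simpa using h2 v hv.2 hv.1
    simpa [insert_eq_of_mem (show t ∈ suppSet G P from ht)] using hPH

theorem suppSet_union_eq (hH : IsMinimalConnector G x H) (hij : i ≠ j) (hik : i ≠ k)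
    (hjk : j ≠ k) {P : G.Walk a₀ a₁} {L : G.Walk c b}
    (hP : IsShortestWalkIn G H (G.neighborSet (x i)) (G.neighborSet (x j)) P)
    (hL : IsShortestWalkIn G H (suppSet G P) (G.neighborSet (x k)) L) :
    suppSet G P ∪ suppSet G L = H :=
  subset_antisymm (union_subset hP.subset hL.subset) <|
    hH.subset_of_connected (union_subset hP.subset hL.subset)
      (induce_union_connected (connected_induce_suppSet P).preconnected
        (connected_induce_suppSet L).preconnected ⟨c, hL.start_mem, L.start_mem_support⟩)
      (attaches_of_ne hij hik hjk ⟨a₀, .inl P.start_mem_support, hP.start_mem⟩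
        ⟨a₁, .inl P.end_mem_support, hP.end_mem⟩ ⟨b, .inr L.end_mem_support, hL.end_mem⟩)

theorem forall_not_adj_of_adj_mem_tail (hH : IsMinimalConnector G x H) (hij : i ≠ j)
    (hik : i ≠ k) (hjk : j ≠ k) {P : G.Walk a₀ a₁} {h : G.Adj c c'} {W : G.Walk c' b}
    (hP : IsShortestWalkIn G H (G.neighborSet (x i)) (G.neighborSet (x j)) P)
    (hL : IsShortestWalkIn G H (suppSet G P) (G.neighborSet (x k)) (cons h W))
    (hi : ∃ r ∈ W.support, G.Adj (x i) r) : ∀ r ∈ W.support, ¬ G.Adj (x j) r := by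
  intro r hr hjr
  have hWH : suppSet G W ⊆ H := fun v hv => hL.subset (List.mem_cons_of_mem c hv)
  have hc := hH.subset_of_connected hWH (connected_induce_suppSet W)
    (attaches_of_ne hij hik hjk hi ⟨r, hr, hjr⟩ ⟨b, W.end_mem_support, hL.end_mem⟩)
    (hP.subset hL.start_mem)
  exact hL.notMem_of_mem_tail hc hL.start_mem

theorem eq_start_of_adj_mem_tail (hH : IsMinimalConnector G x H) (hij : i ≠ j)
    (hik : i ≠ k) (hjk : j ≠ k) {P : G.Walk a₀ a₁} {h : G.Adj c c'} {W : G.Walk c' b}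
    (hP : IsShortestWalkIn G H (G.neighborSet (x i)) (G.neighborSet (x j)) P)
    (hL : IsShortestWalkIn G H (suppSet G P) (G.neighborSet (x k)) (cons h W)) {r : V}
    (hr : r ∈ W.support) (hir : G.Adj (x i) r) : c = a₀ := by
  obtain ⟨T, D, hTD⟩ := mem_support_iff_exists_append.mp (show c ∈ P.support from hL.start_mem)
  have hDP : suppSet G D ⊆ suppSet G P := by rw [hTD, suppSet_append]; exact subset_union_right
  have hX := hH.subset_of_connected (union_subset (hDP.trans hP.subset) hL.subset)
    (induce_union_connected (connected_induce_suppSet D).preconnected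
      (connected_induce_suppSet (cons h W)).preconnected
      ⟨c, D.start_mem_support, (cons h W).start_mem_support⟩)
    (attaches_of_ne hij hik hjk ⟨r, .inr (List.mem_cons_of_mem c hr), hir⟩
      ⟨a₁, .inl D.end_mem_support, hP.end_mem⟩ ⟨b, .inr (cons h W).end_mem_support, hL.end_mem⟩)
  rcases hX (hP.subset P.start_mem_support) with ha | ha
  · exact ((hTD ▸ hP.isPath).eq_of_mem_support_append T.start_mem_support ha).symm
  · exact (hL.eq_start_of_mem ha P.start_mem_support).symm

theorem eq_of_adj_of_adj_mem_tail (hH : IsMinimalConnector G x H) (hij : i ≠ j)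
    (hik : i ≠ k) (hjk : j ≠ k) {P : G.Walk c a₁} {h : G.Adj c c'} {W : G.Walk c' b}
    (hP : IsShortestWalkIn G H (G.neighborSet (x i)) (G.neighborSet (x j)) P)
    (hL : IsShortestWalkIn G H (suppSet G P) (G.neighborSet (x k)) (cons h W)) {r : V}
    (hr : r ∈ W.support) (hir : G.Adj (x i) r) {z : V} (hz : z ∈ P.support)
    (hcz : G.Adj c' z) : z = c := by
  obtain ⟨T, D, hTD⟩ := mem_support_iff_exists_append.mp hz
  have hDP : suppSet G D ⊆ suppSet G P := by rw [hTD, suppSet_append]; exact subset_union_right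
  have hWH : suppSet G W ⊆ H := fun v hv => hL.subset (List.mem_cons_of_mem c hv)
  have hX := hH.subset_of_connected (union_subset (hDP.trans hP.subset) hWH)
    (connected_induce_union (connected_induce_suppSet D).preconnected
      (connected_induce_suppSet W).preconnected D.start_mem_support W.start_mem_support hcz.symm)
    (attaches_of_ne hij hik hjk ⟨r, .inr hr, hir⟩ ⟨a₁, .inl D.end_mem_support, hP.end_mem⟩
      ⟨b, .inr W.end_mem_support, hL.end_mem⟩)
  rcases hX (hP.subset P.start_mem_support) with hc | hc
  · exact ((hTD ▸ hP.isPath).eq_of_mem_support_append T.start_mem_support hc).symm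
  · exact absurd P.start_mem_support (hL.notMem_of_mem_tail hc)

theorem isPathConnector_of_adj_mem_tail (hH : IsMinimalConnector G x H) (hij : i ≠ j)
    (hik : i ≠ k) (hjk : j ≠ k) {P : G.Walk a₀ a₁} {h : G.Adj c c'} {W : G.Walk c' b}
    (hP : IsShortestWalkIn G H (G.neighborSet (x i)) (G.neighborSet (x j)) P)
    (hL : IsShortestWalkIn G H (suppSet G P) (G.neighborSet (x k)) (cons h W))
    (hi : ∃ r ∈ W.support, G.Adj (x i) r) : IsPathConnector G x H := by
  have hj := hH.forall_not_adj_of_adj_mem_tail hij hik hjk hP hL hi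
  obtain ⟨r, hr, hir⟩ := hi
  obtain rfl := hH.eq_start_of_adj_mem_tail hij hik hjk hP hL hr hir
  have hcover := hH.suppSet_union_eq hij hik hjk hP hL
  have hW : (cons h W).IsPath := hL.isPath
  have hcW : c ∉ W.support := ((cons_isPath_iff h W).mp hW).2
  have hcP : c ∈ suppSet G P := P.start_mem_support
  have hF : (W.reverse.append (cons h.symm P)).IsPath := by
    refine hW.of_cons.reverse.append
      (hP.isPath.cons (hL.notMem_of_mem_tail W.start_mem_support)) fun v hv hv' => ?_
    rw [support_reverse, List.mem_reverse] at hv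
    exact (List.mem_cons.mp hv').resolve_right (hL.notMem_of_mem_tail hv)
  have hFc : (W.reverse.append (cons h.symm P)).IsChordless :=
    (hL.isChordless.of_cons hW).reverse.append_cons h.symm hP.isChordless fun y hy z hz hyz => by
      rw [support_reverse, List.mem_reverse] at hy
      obtain rfl := hL.eq_of_adj_of_mem_tail hz (hP.subset hz) hy hyz.symm
      exact ⟨rfl, hH.eq_of_adj_of_adj_mem_tail hij hik hjk hP hL hr hir hz hyz⟩
  refine isPathConnector_of_path hH.injective hH.notMem hjk.symm hik.symm hij.symm hF hFc ?_
    hL.end_mem hP.end_mem (hL.inter_subset_end_of_union_eq hcover hP.subset)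
    (hP.inter_subset_end_of_notMem_tail hcover hcP hj) (hP.subset hcP)
    (hL.subset (List.mem_cons_of_mem c hr)) (fun h => hcW (h ▸ hr)) hP.start_mem hir
  rw [← hcover, suppSet_append, suppSet_reverse, suppSet_cons, suppSet_cons, union_insert,
    union_insert, insert_eq_of_mem (.inl W.start_mem_support), insert_eq_of_mem (.inl hcP),
    union_comm]

theorem exists_eq_append_cons_or (hH : IsMinimalConnector G x H) (hij : i ≠ j)
    (hik : i ≠ k) (hjk : j ≠ k) {P : G.Walk a₀ a₁} {h : G.Adj c c'} {W : G.Walk c' b}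
    (hP : IsShortestWalkIn G H (G.neighborSet (x i)) (G.neighborSet (x j)) P)
    (hL : IsShortestWalkIn G H (suppSet G P) (G.neighborSet (x k)) (cons h W)) {u v : V}
    (hu : u ∈ P.support) (hv : v ∈ P.support) (hcu : G.Adj c' u) (hcv : G.Adj c' v)
    (huv : u ≠ v) :
    (∃ (T : G.Walk a₀ u) (huv : G.Adj u v) (D : G.Walk v a₁), P = T.append (cons huv D)) ∨
      ∃ (T : G.Walk a₀ v) (hvu : G.Adj v u) (D : G.Walk u a₁), P = T.append (cons hvu D) := by
  have hWH : suppSet G W ⊆ H := fun v hv => hL.subset (List.mem_cons_of_mem c hv)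
  have key : ∀ {u v : V} (T : G.Walk a₀ u) (M : G.Walk u v) (E : G.Walk v a₁),
      P = T.append (M.append E) → G.Adj c' u → G.Adj c' v → u ≠ v →
      ∃ (huv : G.Adj u v) (D : G.Walk v a₁), P = T.append (cons huv D) := by
    intro u v T M E hTME hcu hcv huv
    subst hTME
    -- `T ∪ W ∪ E` is connected through `c'` and meets every `N(x l)`, so by minimality the
    -- middle piece `M` has no vertex outside `T ∪ E`.
    have hTEH : suppSet G T ∪ suppSet G E ⊆ H := fun w hw =>
      hP.subset (by rcases hw with hw | hw <;> simp [hw])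
    have hX := hH.subset_of_connected
      (union_subset (union_subset (subset_union_left.trans hTEH) hWH)
        (subset_union_right.trans hTEH))
      (connected_induce_union
        (connected_induce_union (connected_induce_suppSet T).preconnected
          (connected_induce_suppSet W).preconnected T.end_mem_support W.start_mem_support
          hcu.symm).preconnected
        (connected_induce_suppSet E).preconnected (.inr W.start_mem_support) E.start_mem_support
        hcv)
      (attaches_of_ne hij hik hjk ⟨a₀, .inl (.inl T.start_mem_support), hP.start_mem⟩
        ⟨a₁, .inr E.end_mem_support, hP.end_mem⟩ ⟨b, .inl (.inr W.end_mem_support), hL.end_mem⟩)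
    refine hP.isPath.exists_eq_append_cons huv fun w hw => ?_
    have hwP : w ∈ (T.append (M.append E)).support := by simp [mem_support_append_iff, hw]
    rcases hX (hP.subset hwP) with (hwT | hwW) | hwE
    exacts [.inl hwT, absurd hwP (hL.notMem_of_mem_tail hwW), .inr hwE]
  rcases exists_eq_append_append_or P hu hv with ⟨T, M, E, hTME⟩ | ⟨T, M, E, hTME⟩
  · exact .inl ⟨T, key T M E hTME hcu hcv huv⟩
  · exact .inr ⟨T, key T M E hTME hcv hcu huv.symm⟩

theorem eq_or_eq_of_adj_of_adj (hH : IsMinimalConnector G x H) (hij : i ≠ j)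
    (hik : i ≠ k) (hjk : j ≠ k) {P : G.Walk a₀ a₁} {h : G.Adj c c'} {W : G.Walk c' b}
    (hP : IsShortestWalkIn G H (G.neighborSet (x i)) (G.neighborSet (x j)) P)
    (hL : IsShortestWalkIn G H (suppSet G P) (G.neighborSet (x k)) (cons h W)) {f g z : V}
    (hf : f ∈ P.support) (hg : g ∈ P.support) (hc'f : G.Adj c' f) (hc'g : G.Adj c' g)
    (hfg : f ≠ g) (hz : z ∈ P.support) (hc'z : G.Adj c' z) : z = f ∨ z = g := by
  have hadj : ∀ u ∈ P.support, ∀ v ∈ P.support, G.Adj c' u → G.Adj c' v → u ≠ v →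
      G.Adj u v := fun u hu v hv hcu hcv huv => by
    rcases hH.exists_eq_append_cons_or hij hik hjk hP hL hu hv hcu hcv huv with
      ⟨-, huv, -⟩ | ⟨-, hvu, -⟩
    exacts [huv, hvu.symm]
  rcases hP.isChordless.exists_not_adj_or_eq_pair hP.isPath
      (N := {z | z ∈ P.support ∧ G.Adj c' z}) (fun z hz => hz.1) ⟨hf, hc'f⟩ ⟨hg, hc'g⟩ hfg with
    ⟨u, hu, v, hv, huv, hna⟩ | ⟨-, hN⟩
  · exact absurd (hadj u hu.1 v hv.1 hu.2 hv.2 huv) hna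
  · simpa using hN.le ⟨hz, hc'z⟩

theorem isClawConnector_or_isTriangleConnector_of_forall_not_adj
    (hH : IsMinimalConnector G x H) {P : G.Walk a₀ a₁} {h : G.Adj c c'} {W : G.Walk c' b}
    (hP : IsShortestWalkIn G H (G.neighborSet (x 0)) (G.neighborSet (x 1)) P)
    (hL : IsShortestWalkIn G H (suppSet G P) (G.neighborSet (x 2)) (cons h W))
    (h₀ : ∀ r ∈ W.support, ¬ G.Adj (x 0) r) (h₁ : ∀ r ∈ W.support, ¬ G.Adj (x 1) r) :
    IsClawConnector G x H ∨ IsTriangleConnector G x H := by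
  have hcover := hH.suppSet_union_eq (by decide) (by decide) (by decide) hP hL
  have hcP : c ∈ P.support := hL.start_mem
  have hpen : ∀ v ∈ W.support, ∀ z ∈ P.support, G.Adj v z → v = c' := fun v hv z hz hvz =>
    hL.eq_of_adj_of_mem_tail hz (hP.subset hz) hv hvz.symm
  have hN₀ : G.neighborSet (x 0) ∩ H ⊆ {a₀} :=
    hP.reverse.inter_subset_end_of_notMem_tail (by rwa [suppSet_reverse]) (by simpa using hcP) h₀
  have hN₁ : G.neighborSet (x 1) ∩ H ⊆ {a₁} := hP.inter_subset_end_of_notMem_tail hcover hcP h₁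
  have hN₂ : G.neighborSet (x 2) ∩ H ⊆ suppSet G W := fun v hv => by
    obtain rfl := hL.inter_subset_end_of_union_eq hcover hP.subset hv
    exact W.end_mem_support
  by_cases hd : ∃ d ∈ P.support, G.Adj c' d ∧ d ≠ c
  · obtain ⟨f, g, T, hfg, D, hTD, hf, hg⟩ : ∃ (f g : V) (T : G.Walk a₀ f) (hfg : G.Adj f g)
        (D : G.Walk g a₁), P = T.append (cons hfg D) ∧ G.Adj f c' ∧ G.Adj g c' := by
      obtain ⟨d, hd, hc'd, hdc⟩ := hd
      rcases hH.exists_eq_append_cons_or (by decide) (by decide) (by decide) hP hL hcP hd h.symm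
        hc'd hdc.symm with ⟨T, hfg, D, hTD⟩ | ⟨T, hfg, D, hTD⟩
      exacts [⟨_, _, T, hfg, D, hTD, h, hc'd.symm⟩, ⟨_, _, T, hfg, D, hTD, hc'd.symm, h⟩]
    have hfP : f ∈ P.support := by simp [hTD]
    have hgP : g ∈ P.support := by simp [hTD]
    refine .inr <| isTriangleConnector_of_append_cons hH.injective hH.notMem hTD hP.isPath
      hP.isChordless hL.isPath.of_cons hf hg (fun v hv => hL.notMem_of_mem_tail hv)
      (fun v hv z hz hvz => ?_) ?_ hP.start_mem hP.end_mem hL.end_mem hN₀ hN₁ hN₂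
    · obtain rfl := hpen v hv z hz hvz
      exact ⟨rfl, hH.eq_or_eq_of_adj_of_adj (by decide) (by decide) (by decide) hP hL hfP hgP
        hf.symm hg.symm hfg.ne hz hvz⟩
    · rw [← hcover, suppSet_cons, union_insert, insert_eq_of_mem (.inl hcP)]
  · push Not at hd
    obtain ⟨T, D, hTD⟩ := mem_support_iff_exists_append.mp hcP
    refine .inl <| isClawConnector_of_append hH.injective hH.notMem hTD hP.isPath hP.isChordless
      hL.isPath (fun v hv hvP => hL.eq_start_of_mem hv hvP) (fun u hu v hv huv => ?_) hcover
      hP.start_mem hP.end_mem hL.end_mem hN₀ hN₁ fun v hv => List.mem_cons_of_mem c (hN₂ hv)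
    rcases List.mem_cons.mp hu with rfl | hu
    · exact .inl rfl
    · obtain rfl := hpen u hu v hv huv
      exact .inr (hd v hv huv)

end IsMinimalConnector

/-- the three-vertex-attachments lemma. -/
theorem stmt12 {V : Type} (G : SimpleGraph V) (x : Fin 3 → V)
    (hx : Function.Injective x) (H : Set V)
    (hdisj : ∀ i, x i ∉ H) (hconn : (G.induce H).Connected)
    (hnbr : ∀ i, ∃ h ∈ H, G.Adj (x i) h)
    (hmin : ∀ H' : Set V, H' ⊆ H → (G.induce H').Connected →
      (∀ i, ∃ h ∈ H', G.Adj (x i) h) → H' = H) :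
    (∃ i j k : Fin 3, i ≠ j ∧ i ≠ k ∧ j ≠ k ∧
      ∃ p : G.Walk (x i) (x j), p.IsPath ∧
        (InducedWalk G p ∨ (G.Adj (x i) (x j) ∧ ∀ u v : V, u ∈ p.support →
          v ∈ p.support → G.Adj u v → s(u, v) ∈ p.edges ∨ s(u, v) = s(x i, x j))) ∧
        H = suppSet G p \ {x i, x j} ∧
        ((∃ a b : V, a ∈ H ∧ b ∈ H ∧ G.Adj (x k) a ∧ G.Adj (x k) b ∧ a ≠ b ∧ ¬ G.Adj a b) ∨
          (∃ a b : V, a ≠ b ∧ G.Adj a b ∧ G.neighborSet (x k) ∩ H = {a, b}))) ∨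
    (∃ a : V, a ∈ H ∧ ∃ p : (i : Fin 3) → G.Walk a (x i),
      (∀ i, (p i).IsPath) ∧
      H = (⋃ i, suppSet G (p i)) \ {x 0, x 1, x 2} ∧
      (∀ i j, i ≠ j → Disjoint (suppSet G (p i) \ {a}) (suppSet G (p j) \ {a})) ∧
      (∀ i j, i ≠ j → ∀ u v : V, u ∈ suppSet G (p i) \ {a} →
        v ∈ suppSet G (p j) \ {a} → G.Adj u v → s(u, v) = s(x i, x j))) ∨
    (∃ a : Fin 3 → V, (∀ i, a i ∈ H) ∧ (∀ i j, i ≠ j → G.Adj (a i) (a j)) ∧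
      ∃ p : (i : Fin 3) → G.Walk (a i) (x i),
        (∀ i, (p i).IsPath) ∧
        H = (⋃ i, suppSet G (p i)) \ {x 0, x 1, x 2} ∧
        (∀ i j, i ≠ j → Disjoint (suppSet G (p i)) (suppSet G (p j))) ∧
        (∀ i j, i ≠ j → ∀ u v : V, u ∈ suppSet G (p i) → v ∈ suppSet G (p j) →
          G.Adj u v → s(u, v) = s(a i, a j) ∨ s(u, v) = s(x i, x j))) := by
  have hH : IsMinimalConnector G x H := ⟨hx, hdisj, hconn, hnbr, hmin⟩
  obtain ⟨a₀, a₁, P, hP⟩ := hH.exists_isShortestWalkIn 0 1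
  by_cases hA : ∃ t ∈ P.support, G.Adj (x 2) t
  · obtain ⟨t, ht, h2t⟩ := hA
    exact (hH.isPathConnector_or_isClawConnector_of_adj_mem_support hP ht h2t).imp_right .inl
  push Not at hA
  obtain ⟨u, hu, h2u⟩ := hH.attaches 2
  obtain ⟨c, b, L, hL⟩ := exists_isShortestWalkIn (A := suppSet G P) hH.connected
    ⟨a₀, P.start_mem_support, hP.subset P.start_mem_support⟩ ⟨u, h2u, hu⟩
  obtain ⟨c', h, W, rfl⟩ :=
    Walk.exists_eq_cons_of_ne (show c ≠ b from fun hcb => hA c hL.start_mem (hcb ▸ hL.end_mem)) L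
  by_cases h₀ : ∃ r ∈ W.support, G.Adj (x 0) r
  · exact .inl (hH.isPathConnector_of_adj_mem_tail (by decide) (by decide) (by decide) hP hL h₀)
  by_cases h₁ : ∃ r ∈ W.support, G.Adj (x 1) r
  · exact .inl (hH.isPathConnector_of_adj_mem_tail (i := 1) (j := 0) (k := 2) (by decide)
      (by decide) (by decide) hP.reverse (by rwa [suppSet_reverse]) h₁)
  push Not at h₀ h₁
  exact .inr (hH.isClawConnector_or_isTriangleConnector_of_forall_not_adj hP hL h₀ h₁)

end Paper
end

section
/- Let G be a C4-free graph with no clique cutset, and let v and s be non-adjacent vertices of G. Then no connected component of G \ N[v] has its entire neighborhood contained in N(v) ∩ N(s). -/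
open SimpleGraph Set

namespace Paper

variable {V : Type} {W : Type}

lemma c4iso {V : Type} (G : SimpleGraph V) (v x s y : V)
    (hvx : G.Adj v x) (hvy : G.Adj v y) (hsx : G.Adj s x) (hsy : G.Adj s y)
    (hvs : ¬ G.Adj v s) (hxy : ¬ G.Adj x y) (hvsne : v ≠ s) (hxyne : x ≠ y) :
    Nonempty ((G.induce ({v, x, s, y} : Set V)) ≃g cycleGraph 4) := by
  have hvx' : v ≠ x := fun h => G.irrefl (h ▸ hvx)
  have hvy' : v ≠ y := fun h => G.irrefl (h ▸ hvy)
  have hsx' : s ≠ x := fun h => G.irrefl (h ▸ hsx)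
  have hsy' : s ≠ y := fun h => G.irrefl (h ▸ hsy)
  have hsv : ¬ G.Adj s v := fun h => hvs h.symm
  have hyx : ¬ G.Adj y x := fun h => hxy h.symm
  set S : Set V := {v, x, s, y}
  have hv : v ∈ S := by simp [S]
  have hx : x ∈ S := by simp [S]
  have hs : s ∈ S := by simp [S]
  have hy : y ∈ S := by simp [S]
  let f : Fin 4 → ↥S := ![⟨v, hv⟩, ⟨x, hx⟩, ⟨s, hs⟩, ⟨y, hy⟩]
  have hbij : Function.Bijective f := by
    constructor
    · intro a b hab
      fin_cases a <;> fin_cases b <;>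
        simp_all [f, Subtype.ext_iff, hvx', hvy', hsx', hsy', hvsne, hxyne,
          hvx'.symm, hvy'.symm, hsx'.symm, hsy'.symm, hvsne.symm, hxyne.symm]
    · rintro ⟨z, hz⟩
      rcases hz with h | h | h | h
      · exact ⟨0, by simp [f, h]⟩
      · exact ⟨1, by simp [f, h]⟩
      · exact ⟨2, by simp [f, h]⟩
      · exact ⟨3, by simp only [f]; exact Subtype.ext (Set.mem_singleton_iff.mp h).symm⟩
  have iso : cycleGraph 4 ≃g G.induce S := by
    refine ⟨Equiv.ofBijective f hbij, ?_⟩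
    intro a b
    show (G.induce S).Adj (f a) (f b) ↔ (cycleGraph 4).Adj a b
    fin_cases a <;> fin_cases b <;>
      simp [f, comap_adj, cycleGraph_adj, hvx, hvy, hsx, hsy, hvs, hxy, hsv, hyx,
        hvx.symm, hvy.symm, hsx.symm, hsy.symm] <;> decide
  exact ⟨iso.symm⟩

/-- in a C4-free graph with no clique cutset, for non-adjacent vertices
v and s, no component of G \ N[v] has its entire neighborhood inside N(v) ∩ N(s). -/
theorem stmt18 {V : Type} (G : SimpleGraph V)
    (hC4 : HFree G (SimpleGraph.cycleGraph 4)) (hcc : ¬ HasCliqueCutset G)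
    (v s : V) (hvs : v ≠ s) (hadj : ¬ G.Adj v s) :
    ∀ D, IsComponentOf G ((closedNbr G v)ᶜ) D →
      ¬ (setNbr G D ⊆ G.neighborSet v ∩ G.neighborSet s) := by
  intro D hD hND
  obtain ⟨hne, hsub, hconn, hmax⟩ := hD
  set C := setNbr G D with hC
  by_cases hclq : G.IsClique C
  · apply hcc
    refine ⟨C, hclq, ?_⟩
    intro hpre
    obtain ⟨d, hd⟩ := hne
    have hdC : d ∈ Cᶜ := fun h => h.1 hd
    have hvC : v ∈ Cᶜ := by
      intro h
      exact G.irrefl (hND h).1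
    have key : ∀ (a b : ↥Cᶜ), (G.induce Cᶜ).Walk a b → a.1 ∈ D → b.1 ∈ D := by
      intro a b w
      induction w with
      | nil => exact id
      | @cons a c b h p ih =>
        intro ha
        apply ih
        by_contra hc
        have hadj : G.Adj a.1 c.1 := h
        exact c.2 ⟨hc, a.1, ha, hadj⟩
    obtain ⟨w⟩ := hpre ⟨d, hdC⟩ ⟨v, hvC⟩
    have hvD : v ∈ D := key _ _ w hd
    exact (hsub hvD) (Set.mem_insert v _)
  · rw [SimpleGraph.isClique_iff] at hclq
    unfold Set.Pairwise at hclq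
    push_neg at hclq
    obtain ⟨x, hx, y, hy, hxyne, hnadj⟩ := hclq
    have hx' := hND hx
    have hy' := hND hy
    exact hC4 {v, x, s, y} (c4iso G v x s y hx'.1 hy'.1 hx'.2 hy'.2 hadj hnadj hvs hxyne)


end Paper
end
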